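/- arXiv:math/0510044 — 2 statements merged into one kernel-verified Lean document; each statement's English description precedes it below -/
import Mathlib

section
/- Every simple permutation of length n > 2 contains a simple permutation of length n−1 or of length n−2. -/
/-- A permutation of arbitrary length: a length `n` together with a
bijection of `Fin n` (0-indexed positions and values). -/
abbrev PermAny : Type := Σ n : ℕ, Equiv.Perm (Fin n)

/-- `β` is contained as a pattern in `π`. -/
def ContainsPat {k n : ℕ} (β : Equiv.Perm (Fin k)) (π : Equiv.Perm (Fin n)) : Prop :=
  ∃ f : Fin k → Fin n, StrictMono f ∧ ∀ a b : Fin k, β a < β b ↔ π (f a) < π (f b)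

/-- `Av(B)`: the permutations avoiding every member of `B`. -/
def AvSet (B : Set PermAny) : Set PermAny :=
  {p | ∀ b ∈ B, ¬ ContainsPat b.2 p.2}

/-- A permutation class: closed downwards under pattern containment. -/
def IsPermClass (C : Set PermAny) : Prop :=
  ∀ p ∈ C, ∀ q : PermAny, ContainsPat q.2 p.2 → q ∈ C

/-- The positions `a,…,b` form an interval of `π`: the corresponding values
form a set of consecutive integers. -/
def IsIntervalAt {n : ℕ} (π : Equiv.Perm (Fin n)) (a b : Fin n) : Prop :=
  a ≤ b ∧ ∃ c : ℕ,
    (Finset.Icc a b).image (fun i => (π i : ℕ)) = Finset.Icc c (c + ((b : ℕ) - (a : ℕ)))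

/-- A permutation is simple when all of its intervals are trivial. -/
def IsSimplePerm {n : ℕ} (π : Equiv.Perm (Fin n)) : Prop :=
  ∀ a b : Fin n, IsIntervalAt π a b → a = b ∨ ((a : ℕ) = 0 ∧ (b : ℕ) = n - 1)

/-- `Z(B;π;g)`: the set of `B`-avoiding permutations of length `k + ‖g‖` whose
`k` smallest values occupy the positions prescribed by the gap vector `g`
and form the pattern `π`.  (0-indexed: entry `π r` sits at position
`g 0 + ⋯ + g r + r`.) -/
def ZSet (B : Set PermAny) {k : ℕ} (π : Equiv.Perm (Fin k)) (g : Fin (k + 1) → ℕ) :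
    Set (Equiv.Perm (Fin (k + ∑ j, g j))) :=
  {p | (⟨k + ∑ j, g j, p⟩ : PermAny) ∈ AvSet B ∧
    ∀ r : Fin k, ∀ i : Fin (k + ∑ j, g j),
      (i : ℕ) = (∑ j ∈ Finset.univ.filter fun j : Fin (k + 1) => (j : ℕ) ≤ (r : ℕ), g j)
          + (r : ℕ) →
      (p i : ℕ) = (π r : ℕ)}

/-- `J(π)`: the set of gap positions `j` such that `Z(B;π;g)` is empty whenever
`g j > 0`. -/
def JSet (B : Set PermAny) {k : ℕ} (π : Equiv.Perm (Fin k)) : Set (Fin (k + 1)) :=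
  {j | ∀ g : Fin (k + 1) → ℕ, 0 < g j → ZSet B π g = ∅}

/-- `d_r(π)`: delete the entry at position `r` from `π` and standardize. -/
def delEntry {k : ℕ} (π : Equiv.Perm (Fin (k + 1))) (r : Fin (k + 1)) : Equiv.Perm (Fin k) :=
  Equiv.removeNone ((finSuccEquiv' r).symm.trans (π.trans (finSuccEquiv' (π r))))

/-- `d_r(g)`: merge the gaps on either side of position `r`. -/
def delGap {k : ℕ} (g : Fin (k + 2) → ℕ) (r : Fin (k + 1)) : Fin (k + 1) → ℕ :=
  fun j =>
    if (j : ℕ) < (r : ℕ) then g (Fin.castSucc j)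
    else if (j : ℕ) = (r : ℕ) then g (Fin.castSucc j) + g j.succ
    else g j.succ

/-- The entry `π r` is ES-reducible for `π` with respect to `B`
(Zeilberger's original notion). -/
def ESRed (B : Set PermAny) {k : ℕ} (π : Equiv.Perm (Fin (k + 1))) (r : Fin (k + 1)) : Prop :=
  ∀ g : Fin (k + 2) → ℕ, (∀ j ∈ JSet B π, g j = 0) →
    (ZSet B π g).ncard = (ZSet B (delEntry π r) (delGap g r)).ncard

/-- The entry `π r` is ES⁺-reducible for `π` with respect to `B`. -/
def ESPlusRed (B : Set PermAny) {k : ℕ} (π : Equiv.Perm (Fin (k + 1))) (r : Fin (k + 1)) : Prop :=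
  ∀ g : Fin (k + 2) → ℕ, (ZSet B π g).Nonempty →
    (ZSet B π g).ncard = (ZSet B (delEntry π r) (delGap g r)).ncard

/-- `G_r(π)`: the largest lower order ideal of gap vectors `g` such that for all
`h ≤ g`, either `Z(B;π;h)` is nonempty or `Z(B;d_r(π);d_r(h))` is empty. -/
def GrSet (B : Set PermAny) {k : ℕ} (π : Equiv.Perm (Fin (k + 1))) (r : Fin (k + 1)) :
    Set (Fin (k + 2) → ℕ) :=
  {g | ∀ h : Fin (k + 2) → ℕ, h ≤ g →
    (ZSet B π h).Nonempty ∨ ZSet B (delEntry π r) (delGap h r) = ∅}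

namespace SCS

variable {n : ℕ}

def P : Fin n → ℕ := fun i => (i : ℕ)
def V (π : Equiv.Perm (Fin n)) : Fin n → ℕ := fun i => (π i : ℕ)

lemma P_inj : Function.Injective (P (n := n)) := fun _ _ h => Fin.val_injective h
lemma V_inj (π : Equiv.Perm (Fin n)) : Function.Injective (V π) :=
  fun _ _ h => π.injective (Fin.val_injective h)

def Btw (c : Fin n → ℕ) (z s t : Fin n) : Prop :=
  (c s < c z ∧ c z < c t) ∨ (c t < c z ∧ c z < c s)

def Sep (π : Equiv.Perm (Fin n)) (z s t : Fin n) : Prop :=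
  Btw P z s t ∨ Btw (V π) z s t

lemma Btw.symm {c : Fin n → ℕ} {z s t : Fin n} (h : Btw c z s t) : Btw c z t s := h.elim Or.inr Or.inl

lemma Sep.symm {π : Equiv.Perm (Fin n)} {z s t : Fin n} (h : Sep π z s t) : Sep π z t s :=
  h.elim (fun h => Or.inl h.symm) (fun h => Or.inr h.symm)

lemma notBtw_iff {c : Fin n → ℕ} (hc : Function.Injective c) {z s t : Fin n}
    (hzs : z ≠ s) (hzt : z ≠ t) : ¬ Btw c z s t ↔ (c z < c s ↔ c z < c t) := by
  have h1 : c z ≠ c s := fun h => hzs (hc h)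
  have h2 : c z ≠ c t := fun h => hzt (hc h)
  unfold Btw; omega

def IsBlk (π : Equiv.Perm (Fin n)) (Y S : Finset (Fin n)) : Prop :=
  S ⊆ Y ∧ ∀ z ∈ Y, z ∉ S → ∀ s ∈ S, ∀ t ∈ S, ¬ Sep π z s t

def SOn (π : Equiv.Perm (Fin n)) (Y : Finset (Fin n)) : Prop :=
  ∀ S : Finset (Fin n), IsBlk π Y S → S.card ≤ 1 ∨ S = Y

lemma IsBlk.inter {π : Equiv.Perm (Fin n)} {Y S Z : Finset (Fin n)}
    (h : IsBlk π Y S) (hZ : Z ⊆ Y) : IsBlk π Z (S ∩ Z) := by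
  refine ⟨Finset.inter_subset_right, fun z hz hzS s hs t ht => ?_⟩
  exact h.2 z (hZ hz) (fun hzS' => hzS (Finset.mem_inter.2 ⟨hzS', hz⟩))
    s (Finset.mem_inter.1 hs).1 t (Finset.mem_inter.1 ht).1

lemma sOn_of_card_le_two {π : Equiv.Perm (Fin n)} {Y : Finset (Fin n)}
    (h : Y.card ≤ 2) : SOn π Y := by
  intro S hS
  rcases Nat.lt_or_ge S.card 2 with h1 | h1
  · exact Or.inl (by omega)
  · exact Or.inr (Finset.eq_of_subset_of_card_le hS.1 (by omega))

/-- Bridge 1A -/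
lemma sOn_univ_of_isSimple {π : Equiv.Perm (Fin n)} (hπ : IsSimplePerm π) :
    SOn π Finset.univ := by
  intro S hS
  rcases Nat.lt_or_ge S.card 2 with h1 | h1
  · exact Or.inl (by omega)
  have hne : S.Nonempty := Finset.card_pos.1 (by omega)
  set a := S.min' hne with ha_def
  set b := S.max' hne with hb_def
  have ha : a ∈ S := S.min'_mem hne
  have hb : b ∈ S := S.max'_mem hne
  have hab : a ≤ b := S.min'_le _ (S.max'_mem hne)
  have hpos : ∀ i : Fin n, a ≤ i → i ≤ b → i ∈ S := by
    intro i h1i h2i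
    by_contra hi
    have hia : (a : ℕ) ≠ (i : ℕ) := fun h => hi ((Fin.val_injective h) ▸ ha)
    have hib : (i : ℕ) ≠ (b : ℕ) := fun h => hi ((Fin.val_injective h).symm ▸ hb)
    have h1i' : (a : ℕ) ≤ i := h1i
    have h2i' : (i : ℕ) ≤ b := h2i
    exact hS.2 i (Finset.mem_univ i) hi a ha b hb
      (Or.inl (Or.inl ⟨by simpa [P] using lt_of_le_of_ne h1i' hia,
                       by simpa [P] using lt_of_le_of_ne h2i' hib⟩))
  have hSIcc : S = Finset.Icc a b := by
    apply Finset.Subset.antisymm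
    · intro i hi
      exact Finset.mem_Icc.2 ⟨S.min'_le i hi, S.le_max' i hi⟩
    · intro i hi
      rcases Finset.mem_Icc.1 hi with ⟨h1i, h2i⟩
      exact hpos i h1i h2i
  -- values
  set T := S.image (V π) with hT_def
  have hTne : T.Nonempty := hne.image _
  set c := T.min' hTne with hc_def
  set d := T.max' hTne with hd_def
  obtain ⟨sc, hsc, hscv⟩ := Finset.mem_image.1 (T.min'_mem hTne)
  obtain ⟨sd, hsd, hsdv⟩ := Finset.mem_image.1 (T.max'_mem hTne)
  have hval : ∀ v : ℕ, c ≤ v → v ≤ d → v ∈ T := by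
    intro v h1v h2v
    by_contra hv
    have hdn : d < n := by
      rw [hd_def, ← hsdv]
      exact (π sd).isLt
    have hvn : v < n := by omega
    set z := π.symm ⟨v, hvn⟩ with hz_def
    have hVz : V π z = v := by simp [V, hz_def]
    have hzS : z ∉ S := by
      intro hzS
      exact hv (Finset.mem_image.2 ⟨z, hzS, hVz⟩)
    have hc_ne : c ≠ v := fun h => hv (h ▸ T.min'_mem hTne)
    have hd_ne : v ≠ d := fun h => hv (h ▸ T.max'_mem hTne)
    exact hS.2 z (Finset.mem_univ z) hzS sc hsc sd hsd
      (Or.inr (Or.inl ⟨by rw [hscv, hVz]; omega, by rw [hsdv, hVz]; omega⟩))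
  have hTIcc : T = Finset.Icc c d := by
    apply Finset.Subset.antisymm
    · intro v hv
      exact Finset.mem_Icc.2 ⟨T.min'_le v hv, T.le_max' v hv⟩
    · intro v hv
      rcases Finset.mem_Icc.1 hv with ⟨h1v, h2v⟩
      exact hval v h1v h2v
  have hcd : c ≤ d := T.min'_le _ (T.max'_mem hTne)
  have hcardT : T.card = S.card := Finset.card_image_of_injective _ (V_inj π)
  have hcardS : S.card = (b : ℕ) + 1 - (a : ℕ) := by
    rw [hSIcc, Fin.card_Icc]
  have hcardT' : T.card = d + 1 - c := by rw [hTIcc, Nat.card_Icc]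
  have hab' : (a : ℕ) ≤ b := hab
  have hd_eq : d = c + ((b : ℕ) - (a : ℕ)) := by omega
  have hint : IsIntervalAt π a b := by
    refine ⟨hab, c, ?_⟩
    rw [← hSIcc]
    show S.image (V π) = _
    rw [← hT_def, hTIcc, hd_eq]
  rcases hπ a b hint with h | ⟨h0, h1⟩
  · exfalso
    rw [hSIcc, h] at h1
    simp at h1
  · right
    rw [hSIcc]
    apply Finset.eq_univ_of_forall
    intro i
    refine Finset.mem_Icc.2 ⟨?_, ?_⟩
    · show (a : ℕ) ≤ i; omega
    · show (i : ℕ) ≤ b; have := i.isLt; omega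

/-- Bridge 1B -/
lemma isSimple_of_sOn_univ {π : Equiv.Perm (Fin n)} (h : SOn π Finset.univ) :
    IsSimplePerm π := by
  intro a b hint
  obtain ⟨hab, c, himg⟩ := hint
  set S := Finset.Icc a b with hS_def
  have haS : a ∈ S := Finset.mem_Icc.2 ⟨le_refl a, hab⟩
  have hblk : IsBlk π Finset.univ S := by
    refine ⟨Finset.subset_univ _, fun z _ hz s hs t ht hsep => ?_⟩
    rcases Finset.mem_Icc.1 hs with ⟨h1s, h2s⟩
    rcases Finset.mem_Icc.1 ht with ⟨h1t, h2t⟩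
    have h1s' : (a : ℕ) ≤ s := h1s
    have h2s' : (s : ℕ) ≤ b := h2s
    have h1t' : (a : ℕ) ≤ t := h1t
    have h2t' : (t : ℕ) ≤ b := h2t
    have hzmem : z ∉ Finset.Icc a b := hz
    rw [Finset.mem_Icc] at hzmem
    have hzpos : ¬ ((a : ℕ) ≤ z ∧ (z : ℕ) ≤ b) := by
      intro ⟨u1, u2⟩
      exact hzmem ⟨u1, u2⟩
    -- value facts
    have hmem : ∀ w : Fin n, w ∈ S → c ≤ V π w ∧ V π w ≤ c + ((b:ℕ) - (a:ℕ)) := by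
      intro w hw
      have : V π w ∈ (Finset.Icc a b).image (fun i => ((π i : Fin n) : ℕ)) :=
        Finset.mem_image_of_mem _ hw
      rw [himg] at this
      exact Finset.mem_Icc.1 this
    have hznot : ¬ (c ≤ V π z ∧ V π z ≤ c + ((b:ℕ) - (a:ℕ))) := by
      rintro ⟨u1, u2⟩
      have : V π z ∈ Finset.Icc c (c + ((b:ℕ) - (a:ℕ))) := Finset.mem_Icc.2 ⟨u1, u2⟩
      rw [← himg] at this
      obtain ⟨w, hw, hwv⟩ := Finset.mem_image.1 this
      have : w = z := V_inj π hwv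
      exact hz (this ▸ hw)
    obtain ⟨hs1, hs2⟩ := hmem s hs
    obtain ⟨ht1, ht2⟩ := hmem t ht
    rcases hsep with hp | hv
    · unfold Btw P at hp; omega
    · unfold Btw at hv; omega
  rcases h S hblk with h1 | h1
  · left
    have : S.card = (b : ℕ) + 1 - (a : ℕ) := by
      rw [hS_def, Fin.card_Icc]
    have hab' : (a : ℕ) ≤ b := hab
    have : (a : ℕ) = (b : ℕ) := by omega
    exact Fin.val_injective this
  · right
    have hn : 0 < n := a.pos
    have h0 : (⟨0, hn⟩ : Fin n) ∈ S := h1 ▸ Finset.mem_univ _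
    have hlast : (⟨n - 1, by omega⟩ : Fin n) ∈ S := h1 ▸ Finset.mem_univ _
    rw [Finset.mem_Icc] at h0 hlast
    constructor
    · have : (a : ℕ) ≤ (⟨0, hn⟩ : Fin n) := h0.1
      simpa using this
    · have h2 : (n - 1 : ℕ) ≤ (b : ℕ) := hlast.2
      have := b.isLt
      omega

/-- Part 2: from a relationally-simple subset, extract a simple pattern. -/
lemma exists_simple_pattern {π : Equiv.Perm (Fin n)} {Y : Finset (Fin n)}
    (hY : SOn π Y) {m : ℕ} (hm : Y.card = m) :
    ∃ σ : Equiv.Perm (Fin m), IsSimplePerm σ ∧ ContainsPat σ π := by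
  classical
  set e := Y.orderIsoOfFin hm with he_def
  have hVs : (Y.image (fun i => π i)).card = m := by
    rw [Finset.card_image_of_injective _ π.injective, hm]
  set g := (Y.image (fun i => π i)).orderIsoOfFin hVs with hg_def
  have hmem : ∀ i : Fin m, π (e i).1 ∈ Y.image (fun i => π i) :=
    fun i => Finset.mem_image_of_mem _ (e i).2
  set σ0 : Fin m → Fin m := fun i => g.symm ⟨π (e i).1, hmem i⟩ with hσ0_def
  have hσ0inj : Function.Injective σ0 := by
    intro i j h
    have h2 := g.symm.injective h
    have h3 : π (e i).1 = π (e j).1 := congrArg Subtype.val h2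
    have h4 : (e i).1 = (e j).1 := π.injective h3
    exact e.injective (Subtype.val_injective h4)
  set σ : Equiv.Perm (Fin m) := Equiv.ofBijective σ0 (Finite.injective_iff_bijective.mp hσ0inj)
    with hσ_def
  have hσ0 : ∀ i, σ i = σ0 i := fun i => rfl
  have keyv : ∀ i j : Fin m, σ i < σ j ↔ π (e i).1 < π (e j).1 := by
    intro i j
    rw [hσ0, hσ0]
    constructor
    · intro h
      have := g.symm.lt_iff_lt.1 h
      exact this
    · intro h
      exact g.symm.lt_iff_lt.2 (by exact h)
  have keyp : ∀ i j : Fin m, i < j ↔ (e i).1 < (e j).1 := by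
    intro i j
    constructor
    · intro h; exact e.lt_iff_lt.2 h
    · intro h
      exact e.lt_iff_lt.1 (by exact h)
  refine ⟨σ, ?_, ⟨fun i => (e i).1, fun i j h => (keyp i j).1 h, fun a b => keyv a b⟩⟩
  apply isSimple_of_sOn_univ
  intro S' hS'
  set S : Finset (Fin n) := S'.image (fun i => (e i).1) with hS_def
  have hinj2 : Function.Injective (fun i : Fin m => (e i).1) := by
    intro i j h
    exact e.injective (Subtype.val_injective h)
  have hblk : IsBlk π Y S := by
    constructor
    · intro x hx
      obtain ⟨i, _, rfl⟩ := Finset.mem_image.1 hx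
      exact (e i).2
    · intro z hz hzS s hs t ht hsep
      obtain ⟨si, hsi, rfl⟩ := Finset.mem_image.1 hs
      obtain ⟨ti, hti, rfl⟩ := Finset.mem_image.1 ht
      set zi := e.symm ⟨z, hz⟩ with hzi_def
      have hze : (e zi).1 = z := by rw [hzi_def]; simp
      have hziS : zi ∉ S' := by
        intro hmem2
        apply hzS
        rw [← hze]
        exact Finset.mem_image_of_mem _ hmem2
      apply hS'.2 zi (Finset.mem_univ zi) hziS si hsi ti hti
      -- transfer Sep
      have t1 : ∀ i j : Fin m, P i < P j ↔ P (e i).1 < P (e j).1 := by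
        intro i j
        show (i : ℕ) < (j : ℕ) ↔ ((e i).1 : ℕ) < ((e j).1 : ℕ)
        constructor
        · intro h; exact (keyp i j).1 h
        · intro h; exact (keyp i j).2 h
      have t2 : ∀ i j : Fin m, V σ i < V σ j ↔ V π (e i).1 < V π (e j).1 := by
        intro i j
        show ((σ i : Fin m) : ℕ) < (σ j : ℕ) ↔ ((π (e i).1 : Fin n) : ℕ) < (π (e j).1 : ℕ)
        constructor
        · intro h; exact (keyv i j).1 h
        · intro h; exact (keyv i j).2 h
      rcases hsep with hp | hv
      · left
        unfold Btw at hp ⊢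
        rw [← hze] at hp
        rcases hp with ⟨u1, u2⟩ | ⟨u1, u2⟩
        · exact Or.inl ⟨(t1 _ _).2 u1, (t1 _ _).2 u2⟩
        · exact Or.inr ⟨(t1 _ _).2 u1, (t1 _ _).2 u2⟩
      · right
        unfold Btw at hv ⊢
        rw [← hze] at hv
        rcases hv with ⟨u1, u2⟩ | ⟨u1, u2⟩
        · exact Or.inl ⟨(t2 _ _).2 u1, (t2 _ _).2 u2⟩
        · exact Or.inr ⟨(t2 _ _).2 u1, (t2 _ _).2 u2⟩
  rcases hY S hblk with h1 | h1
  · left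
    rwa [hS_def, Finset.card_image_of_injective _ hinj2] at h1
  · right
    apply Finset.eq_univ_of_card
    have : S.card = Y.card := by rw [h1]
    rw [hS_def, Finset.card_image_of_injective _ hinj2] at this
    simp [this, hm]

section DLemma

def SumCutAt (f : ℕ → ℕ) (m k : ℕ) : Prop :=
  0 < k ∧ k < m ∧ ∀ i j, i < k → k ≤ j → j < m → f i < f j

def SkewCutAt (f : ℕ → ℕ) (m k : ℕ) : Prop :=
  0 < k ∧ k < m ∧ ∀ i j, i < k → k ≤ j → j < m → f j < f i

def Pat2413 (f : ℕ → ℕ) (m : ℕ) : Prop :=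
  ∃ i1 i2 i3 i4, i1 < i2 ∧ i2 < i3 ∧ i3 < i4 ∧ i4 < m ∧
    f i3 < f i1 ∧ f i1 < f i4 ∧ f i4 < f i2

def Pat3142 (f : ℕ → ℕ) (m : ℕ) : Prop :=
  ∃ i1 i2 i3 i4, i1 < i2 ∧ i2 < i3 ∧ i3 < i4 ∧ i4 < m ∧
    f i2 < f i4 ∧ f i4 < f i1 ∧ f i1 < f i3

lemma sep_D : ∀ m (f : ℕ → ℕ), (∀ i j, i < m → j < m → f i = f j → i = j) → 2 ≤ m →
    (∃ k, SumCutAt f m k) ∨ (∃ k, SkewCutAt f m k) ∨ Pat2413 f m ∨ Pat3142 f m := by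
  classical
  intro m
  induction m using Nat.strong_induction_on with
  | _ m IH =>
  intro f hinj hm
  rcases Nat.lt_or_ge m 3 with hm3 | hm3
  · -- m = 2
    have hm2 : m = 2 := by omega
    subst hm2
    have h01 : f 0 ≠ f 1 := fun h => by
      have := hinj 0 1 (by omega) (by omega) h
      omega
    rcases Nat.lt_or_ge (f 0) (f 1) with h | h
    · refine Or.inl ⟨1, by omega, by omega, fun i j hi hj hjm => ?_⟩
      have hi0 : i = 0 := by omega
      have hj1 : j = 1 := by omega
      subst hi0; subst hj1
      exact h
    · refine Or.inr (Or.inl ⟨1, by omega, by omega, fun i j hi hj hjm => ?_⟩)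
      have hi0 : i = 0 := by omega
      have hj1 : j = 1 := by omega
      subst hi0; subst hj1
      omega
  · -- m ≥ 3
    have hinj' : ∀ i j, i < m - 1 → j < m - 1 → f i = f j → i = j :=
      fun i j hi hj h => hinj i j (by omega) (by omega) h
    rcases IH (m - 1) (by omega) f hinj' (by omega) with ⟨k, hk⟩ | ⟨k, hk⟩ | hpat | hpat
    · -- sum-cut branch
      have hex : ∃ k, SumCutAt f (m - 1) k := ⟨k, hk⟩
      set K := Nat.find hex with hK_def
      obtain ⟨hK0, hK1, hKcut⟩ := Nat.find_spec hex
      set z := f (m - 1) with hz_def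
      by_cases ha : ∀ i, i < K → f i < z
      · -- extend sum-cut
        refine Or.inl ⟨K, hK0, by omega, fun i j hi hj hjm => ?_⟩
        rcases Nat.lt_or_ge j (m - 1) with hj' | hj'
        · exact hKcut i j hi hj hj'
        · have : j = m - 1 := by omega
          subst this
          exact ha i hi
      · push_neg at ha
        obtain ⟨iL, hiL, hiL2⟩ := ha   -- f iL ≥ z, iL < K
        have hiLne : f iL ≠ z := fun h => by
          have := hinj iL (m-1) (by omega) (by omega) h; omega
        have hiLgt : z < f iL := by omega
        by_cases hb : ∀ i, i < K → z < f i
        · -- skew cut at m - 1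
          refine Or.inr (Or.inl ⟨m - 1, by omega, by omega, fun i j hi hj hjm => ?_⟩)
          have hj' : j = m - 1 := by omega
          subst hj'
          rcases Nat.lt_or_ge i K with hi' | hi'
          · exact hb i hi'
          · have h0 : f 0 < f i := hKcut 0 i hK0 hi' hi
            have := hb 0 hK0
            omega
        · push_neg at hb
          obtain ⟨iH, hiH, hiH2⟩ := hb  -- f iH ≤ z, iH < K
          have hiHne : f iH ≠ z := fun h => by
            have := hinj iH (m-1) (by omega) (by omega) h; omega
          have hiHlt : f iH < z := by omega
          -- find descending crossing g < h < K with f h < z < f g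
          by_cases hc : ∃ g h, g < h ∧ h < K ∧ f h < z ∧ z < f g
          · obtain ⟨g, h, hgh, hhK, hfh, hfg⟩ := hc
            refine Or.inr (Or.inr (Or.inr ⟨g, h, K, m - 1, hgh, hhK, by omega, by omega,
              ?_, ?_, ?_⟩))
            · exact hfh
            · exact hfg
            · exact hKcut g K (by omega) (by omega) (by omega)
          · exfalso
            have hexH : ∃ h0, h0 < K ∧ z < f h0 := ⟨iL, hiL, hiLgt⟩
            -- least high index
            have hexH' : ∃ h0, z < f h0 ∧ h0 < K := ⟨iL, hiLgt, hiL⟩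
            set P := fun h0 => z < f h0 ∧ h0 < K with hP_def
            have hexP : ∃ h0, P h0 := hexH'
            set h0 := Nat.find hexP with hh0_def
            obtain ⟨hh0high, hh0K⟩ := Nat.find_spec hexP
            have hlow : ∀ j, j < h0 → f j < z := by
              intro j hj
              have hne : f j ≠ z := fun h => by
                have := hinj j (m-1) (by omega) (by omega) h; omega
              rcases Nat.lt_or_ge (f j) z with h | h
              · exact h
              · exfalso
                exact Nat.find_min hexP hj ⟨by omega, by omega⟩
            have hhigh : ∀ j, h0 ≤ j → j < K → z < f j := by
              intro j hj hjK
              rcases Nat.eq_or_lt_of_le hj with h | h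
              · rw [← h]; exact hh0high
              · have hne : f j ≠ z := fun hcontr => by
                  have := hinj j (m-1) (by omega) (by omega) hcontr; omega
                rcases Nat.lt_or_ge z (f j) with h2 | h2
                · exact h2
                · exact absurd ⟨h0, j, h, hjK, by omega, hh0high⟩ hc
            have hh0pos : 0 < h0 := by
              rcases Nat.eq_or_lt_of_le (Nat.zero_le h0) with h | h
              · exfalso
                have := hhigh iH (by omega) hiH
                omega
              · exact h
            -- h0 is a smaller sum-cut of m - 1
            have : SumCutAt f (m - 1) h0 := by
              refine ⟨hh0pos, by omega, fun i j hi hj hjm => ?_⟩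
              rcases Nat.lt_or_ge j K with hjK | hjK
              · have := hlow i hi
                have := hhigh j hj hjK
                omega
              · exact hKcut i j (by omega) hjK hjm
            exact Nat.find_min hex hh0K this
    · -- skew-cut branch (mirror)
      have hex : ∃ k, SkewCutAt f (m - 1) k := ⟨k, hk⟩
      set K := Nat.find hex with hK_def
      obtain ⟨hK0, hK1, hKcut⟩ := Nat.find_spec hex
      set z := f (m - 1) with hz_def
      by_cases ha : ∀ i, i < K → z < f i
      · refine Or.inr (Or.inl ⟨K, hK0, by omega, fun i j hi hj hjm => ?_⟩)
        rcases Nat.lt_or_ge j (m - 1) with hj' | hj'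
        · exact hKcut i j hi hj hj'
        · have : j = m - 1 := by omega
          subst this
          exact ha i hi
      · push_neg at ha
        obtain ⟨iL, hiL, hiL2⟩ := ha
        have hiLne : f iL ≠ z := fun h => by
          have := hinj iL (m-1) (by omega) (by omega) h; omega
        have hiLlt : f iL < z := by omega
        by_cases hb : ∀ i, i < K → f i < z
        · refine Or.inl ⟨m - 1, by omega, by omega, fun i j hi hj hjm => ?_⟩
          have hj' : j = m - 1 := by omega
          subst hj'
          rcases Nat.lt_or_ge i K with hi' | hi'
          · exact hb i hi'
          · have h0 : f i < f 0 := hKcut 0 i hK0 hi' hi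
            have := hb 0 hK0
            omega
        · push_neg at hb
          obtain ⟨iH, hiH, hiH2⟩ := hb
          have hiHne : f iH ≠ z := fun h => by
            have := hinj iH (m-1) (by omega) (by omega) h; omega
          have hiHgt : z < f iH := by omega
          by_cases hc : ∃ g h, g < h ∧ h < K ∧ f g < z ∧ z < f h
          · obtain ⟨g, h, hgh, hhK, hfg, hfh⟩ := hc
            refine Or.inr (Or.inr (Or.inl ⟨g, h, K, m - 1, hgh, hhK, by omega, by omega,
              ?_, ?_, ?_⟩))
            · exact hKcut g K (by omega) (by omega) (by omega)
            · exact hfg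
            · exact hfh
          · exfalso
            set P := fun h0 => f h0 < z ∧ h0 < K with hP_def
            have hexP : ∃ h0, P h0 := ⟨iL, hiLlt, hiL⟩
            set h0 := Nat.find hexP with hh0_def
            obtain ⟨hh0low, hh0K⟩ := Nat.find_spec hexP
            have hhighpre : ∀ j, j < h0 → z < f j := by
              intro j hj
              have hne : f j ≠ z := fun h => by
                have := hinj j (m-1) (by omega) (by omega) h; omega
              rcases Nat.lt_or_ge z (f j) with h | h
              · exact h
              · exfalso
                exact Nat.find_min hexP hj ⟨by omega, by omega⟩
            have hlowpost : ∀ j, h0 ≤ j → j < K → f j < z := by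
              intro j hj hjK
              rcases Nat.eq_or_lt_of_le hj with h | h
              · rw [← h]; exact hh0low
              · have hne : f j ≠ z := fun hcontr => by
                  have := hinj j (m-1) (by omega) (by omega) hcontr; omega
                rcases Nat.lt_or_ge (f j) z with h2 | h2
                · exact h2
                · exact absurd ⟨h0, j, h, hjK, hh0low, by omega⟩ hc
            have hh0pos : 0 < h0 := by
              rcases Nat.eq_or_lt_of_le (Nat.zero_le h0) with h | h
              · exfalso
                have := hlowpost iH (by omega) hiH
                omega
              · exact h
            have : SkewCutAt f (m - 1) h0 := by
              refine ⟨hh0pos, by omega, fun i j hi hj hjm => ?_⟩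
              rcases Nat.lt_or_ge j K with hjK | hjK
              · have := hhighpre i hi
                have := hlowpost j hj hjK
                omega
              · exact hKcut i j (by omega) hjK hjm
            exact Nat.find_min hex hh0K this
    · exact Or.inr (Or.inr (Or.inl (by
        obtain ⟨i1, i2, i3, i4, h⟩ := hpat
        exact ⟨i1, i2, i3, i4, h.1, h.2.1, h.2.2.1, by omega, h.2.2.2.2⟩)))
    · exact Or.inr (Or.inr (Or.inr (by
        obtain ⟨i1, i2, i3, i4, h⟩ := hpat
        exact ⟨i1, i2, i3, i4, h.1, h.2.1, h.2.2.1, by omega, h.2.2.2.2⟩)))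

end DLemma

section Quad

variable {π : Equiv.Perm (Fin n)}

lemma blk_of_split (π : Equiv.Perm (Fin n)) (S : Finset (Fin n))
    (hpos : (∀ z s, z ∉ S → s ∈ S → (z:ℕ) < (s:ℕ)) ∨ (∀ z s, z ∉ S → s ∈ S → (s:ℕ) < (z:ℕ)))
    (hval : (∀ z s, z ∉ S → s ∈ S → V π z < V π s) ∨ (∀ z s, z ∉ S → s ∈ S → V π s < V π z)) :
    IsBlk π Finset.univ S := by
  refine ⟨Finset.subset_univ _, fun z _ hz s hs t ht hsep => ?_⟩
  rcases hsep with hp | hv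
  · rcases hpos with h | h
    · have h1 := h z s hz hs
      have h2 := h z t hz ht
      unfold Btw P at hp; omega
    · have h1 := h z s hz hs
      have h2 := h z t hz ht
      unfold Btw P at hp; omega
  · rcases hval with h | h
    · have h1 := h z s hz hs
      have h2 := h z t hz ht
      unfold Btw at hv; omega
    · have h1 := h z s hz hs
      have h2 := h z t hz ht
      unfold Btw at hv; omega

def fval (π : Equiv.Perm (Fin n)) : ℕ → ℕ := fun i =>
  if h : i < n then (π ⟨i, h⟩ : ℕ) else n + i

lemma fval_eq (π : Equiv.Perm (Fin n)) (i : Fin n) : fval π (i : ℕ) = V π i := by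
  simp [fval, i.isLt, V]

lemma fval_inj (π : Equiv.Perm (Fin n)) :
    ∀ i j, i < n → j < n → fval π i = fval π j → i = j := by
  intro i j hi hj h
  rw [show i = ((⟨i, hi⟩ : Fin n) : ℕ) from rfl, fval_eq] at h
  rw [show j = ((⟨j, hj⟩ : Fin n) : ℕ) from rfl, fval_eq] at h
  have := V_inj π h
  exact congrArg Fin.val this

lemma cut_contra {π : Equiv.Perm (Fin n)} (hA : SOn π Finset.univ) (hn : 3 ≤ n)
    {k : ℕ} (h : SumCutAt (fval π) n k ∨ SkewCutAt (fval π) n k) : False := by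
  have hk0 : 0 < k := by rcases h with ⟨h1,_,_⟩ | ⟨h1,_,_⟩ <;> exact h1
  have hk1 : k < n := by rcases h with ⟨_,h1,_⟩ | ⟨_,h1,_⟩ <;> exact h1
  -- choose the side with at least 2 elements
  rcases Nat.lt_or_ge k 2 with hk2 | hk2
  · -- upper side S = positions ≥ k, card n - k ≥ 2
    set S := Finset.Icc (⟨k, by omega⟩ : Fin n) ⟨n-1, by omega⟩ with hS_def
    have hmem : ∀ i : Fin n, i ∈ S ↔ k ≤ (i : ℕ) := by
      intro i
      rw [hS_def, Finset.mem_Icc]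
      constructor
      · intro ⟨h1, _⟩; exact h1
      · intro h1
        refine ⟨h1, ?_⟩
        show (i : ℕ) ≤ n - 1
        have := i.isLt; omega
    have hcard : S.card = n - k := by
      rw [hS_def, Fin.card_Icc]; simp; omega
    have hblk : IsBlk π Finset.univ S := by
      apply blk_of_split
      · left
        intro z s hz hs
        rw [hmem] at hz hs
        omega
      · rcases h with hcut | hcut
        · left
          intro z s hz hs
          rw [hmem] at hz hs
          rw [← fval_eq, ← fval_eq]
          exact hcut.2.2 _ _ (by omega) hs s.isLt
        · right
          intro z s hz hs
          rw [hmem] at hz hs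
          rw [← fval_eq, ← fval_eq]
          exact hcut.2.2 _ _ (by omega) hs s.isLt
    rcases hA S hblk with h1 | h1
    · omega
    · have : S.card = n := by rw [h1, Finset.card_univ, Fintype.card_fin]
      omega
  · -- lower side S = positions < k, card k ≥ 2
    set S := Finset.Icc (⟨0, by omega⟩ : Fin n) ⟨k-1, by omega⟩ with hS_def
    have hmem : ∀ i : Fin n, i ∈ S ↔ (i : ℕ) < k := by
      intro i
      rw [hS_def, Finset.mem_Icc]
      constructor
      · intro ⟨_, h2⟩
        have : (i : ℕ) ≤ k - 1 := h2
        omega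
      · intro h1
        exact ⟨by show (0:ℕ) ≤ (i:ℕ); omega, by show (i : ℕ) ≤ k - 1; omega⟩
    have hcard : S.card = k := by
      rw [hS_def, Fin.card_Icc]; simp; omega
    have hblk : IsBlk π Finset.univ S := by
      apply blk_of_split
      · right
        intro z s hz hs
        rw [hmem] at hz hs
        omega
      · rcases h with hcut | hcut
        · right
          intro z s hz hs
          rw [hmem] at hz hs
          rw [← fval_eq, ← fval_eq]
          exact hcut.2.2 _ _ hs (by omega) z.isLt
        · left
          intro z s hz hs
          rw [hmem] at hz hs
          rw [← fval_eq, ← fval_eq]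
          exact hcut.2.2 _ _ hs (by omega) z.isLt
    rcases hA S hblk with h1 | h1
    · omega
    · have : S.card = n := by rw [h1, Finset.card_univ, Fintype.card_fin]
      omega

lemma quad_sOn {a b c d : Fin n} (hab : a < b) (hbc : b < c) (hcd : c < d)
    (s1 : Sep π d a b) (s2 : Sep π b a c) (s3 : Sep π b a d) (s4 : Sep π a b c)
    (s5 : Sep π c b d) (s6 : Sep π a c d) : SOn π ({a,b,c,d} : Finset (Fin n)) := by
  intro S hS
  rcases Nat.lt_or_ge S.card 2 with h1 | h1
  · exact Or.inl (by omega)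
  right
  have maY : a ∈ ({a,b,c,d} : Finset (Fin n)) := by simp
  have mbY : b ∈ ({a,b,c,d} : Finset (Fin n)) := by simp
  have mcY : c ∈ ({a,b,c,d} : Finset (Fin n)) := by simp
  have mdY : d ∈ ({a,b,c,d} : Finset (Fin n)) := by simp
  have force : ∀ z ∈ ({a,b,c,d} : Finset (Fin n)), ∀ s ∈ S, ∀ t ∈ S, Sep π z s t → z ∈ S := by
    intro z hz s hs t ht hsep
    by_contra hzS
    exact hS.2 z hz hzS s hs t ht hsep
  have final : a ∈ S → b ∈ S → c ∈ S → d ∈ S → S = ({a,b,c,d} : Finset (Fin n)) := by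
    intro ha hb hc hd
    apply Finset.Subset.antisymm hS.1
    intro x hx
    simp only [Finset.mem_insert, Finset.mem_singleton] at hx
    rcases hx with rfl | rfl | rfl | rfl <;> assumption
  have stepAB : a ∈ S → b ∈ S → S = ({a,b,c,d} : Finset (Fin n)) := by
    intro ha hb
    have hd := force d mdY a ha b hb s1
    have hc := force c mcY b hb d hd s5
    exact final ha hb hc hd
  have stepAC : a ∈ S → c ∈ S → S = ({a,b,c,d} : Finset (Fin n)) := by
    intro ha hc
    exact stepAB ha (force b mbY a ha c hc s2)
  have stepAD : a ∈ S → d ∈ S → S = ({a,b,c,d} : Finset (Fin n)) := by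
    intro ha hd
    exact stepAB ha (force b mbY a ha d hd s3)
  have stepBC : b ∈ S → c ∈ S → S = ({a,b,c,d} : Finset (Fin n)) := by
    intro hb hc
    exact stepAB (force a maY b hb c hc s4) hb
  have stepBD : b ∈ S → d ∈ S → S = ({a,b,c,d} : Finset (Fin n)) := by
    intro hb hd
    exact stepBC hb (force c mcY b hb d hd s5)
  have stepCD : c ∈ S → d ∈ S → S = ({a,b,c,d} : Finset (Fin n)) := by
    intro hc hd
    exact stepAC (force a maY c hc d hd s6) hc
  obtain ⟨s, hs, t, ht, hst⟩ := Finset.one_lt_card.1 h1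
  have hsY := hS.1 hs
  have htY := hS.1 ht
  simp only [Finset.mem_insert, Finset.mem_singleton] at hsY htY
  rcases hsY with rfl | rfl | rfl | rfl <;> rcases htY with rfl | rfl | rfl | rfl <;>
    first
      | exact absurd rfl hst
      | exact stepAB hs ht | exact stepAB ht hs
      | exact stepAC hs ht | exact stepAC ht hs
      | exact stepAD hs ht | exact stepAD ht hs
      | exact stepBC hs ht | exact stepBC ht hs
      | exact stepBD hs ht | exact stepBD ht hs
      | exact stepCD hs ht | exact stepCD ht hs

/-- existence of a relationally simple 4-subset -/
lemma exists_quad {π : Equiv.Perm (Fin n)} (hA : SOn π Finset.univ) (hn : 5 ≤ n) :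
    ∃ Y : Finset (Fin n), Y.card = 4 ∧ SOn π Y := by
  rcases sep_D n (fval π) (fval_inj π) (by omega) with ⟨k, hk⟩ | ⟨k, hk⟩ | hpat | hpat
  · exact absurd (Or.inl hk) (fun h => cut_contra hA (by omega) h)
  · exact absurd (Or.inr hk) (fun h => cut_contra hA (by omega) h)
  · obtain ⟨i1, i2, i3, i4, h12, h23, h34, h4n, v31, v14, v42⟩ := hpat
    set a : Fin n := ⟨i1, by omega⟩
    set b : Fin n := ⟨i2, by omega⟩
    set c : Fin n := ⟨i3, by omega⟩
    set d : Fin n := ⟨i4, by omega⟩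
    have ea : fval π i1 = V π a := fval_eq π a
    have eb : fval π i2 = V π b := fval_eq π b
    have ec : fval π i3 = V π c := fval_eq π c
    have ed : fval π i4 = V π d := fval_eq π d
    rw [ea] at v31 v14
    rw [eb] at v42
    rw [ec] at v31
    rw [ed] at v14 v42
    have hab : a < b := by show i1 < i2; omega
    have hbc : b < c := by show i2 < i3; omega
    have hcd : c < d := by show i3 < i4; omega
    refine ⟨{a,b,c,d}, ?_, quad_sOn hab hbc hcd
      (Or.inr (Or.inl ⟨by omega, by omega⟩))
      (Or.inl (Or.inl ⟨by show i1 < i2; omega, by show i2 < i3; omega⟩))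
      (Or.inl (Or.inl ⟨by show i1 < i2; omega, by show i2 < i4; omega⟩))
      (Or.inr (Or.inr ⟨by omega, by omega⟩))
      (Or.inl (Or.inl ⟨by show i2 < i3; omega, by show i3 < i4; omega⟩))
      (Or.inr (Or.inl ⟨by omega, by omega⟩))⟩
    · have h1 : a ∉ ({b,c,d} : Finset (Fin n)) := by
        simp only [Finset.mem_insert, Finset.mem_singleton, Fin.ext_iff]
        push_neg
        refine ⟨by show i1 ≠ i2; omega, by show i1 ≠ i3; omega, by show i1 ≠ i4; omega⟩
      have h2 : b ∉ ({c,d} : Finset (Fin n)) := by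
        simp only [Finset.mem_insert, Finset.mem_singleton, Fin.ext_iff]
        push_neg
        refine ⟨by show i2 ≠ i3; omega, by show i2 ≠ i4; omega⟩
      have h3 : c ∉ ({d} : Finset (Fin n)) := by
        simp only [Finset.mem_singleton, Fin.ext_iff]
        show i3 ≠ i4; omega
      rw [Finset.card_insert_of_notMem h1, Finset.card_insert_of_notMem h2,
        Finset.card_insert_of_notMem h3, Finset.card_singleton]
  · obtain ⟨i1, i2, i3, i4, h12, h23, h34, h4n, v24, v41, v13⟩ := hpat
    set a : Fin n := ⟨i1, by omega⟩
    set b : Fin n := ⟨i2, by omega⟩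
    set c : Fin n := ⟨i3, by omega⟩
    set d : Fin n := ⟨i4, by omega⟩
    have ea : fval π i1 = V π a := fval_eq π a
    have eb : fval π i2 = V π b := fval_eq π b
    have ec : fval π i3 = V π c := fval_eq π c
    have ed : fval π i4 = V π d := fval_eq π d
    rw [ea] at v41 v13
    rw [eb] at v24
    rw [ec] at v13
    rw [ed] at v24 v41
    have hab : a < b := by show i1 < i2; omega
    have hbc : b < c := by show i2 < i3; omega
    have hcd : c < d := by show i3 < i4; omega
    refine ⟨{a,b,c,d}, ?_, quad_sOn hab hbc hcd
      (Or.inr (Or.inr ⟨by omega, by omega⟩))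
      (Or.inl (Or.inl ⟨by show i1 < i2; omega, by show i2 < i3; omega⟩))
      (Or.inl (Or.inl ⟨by show i1 < i2; omega, by show i2 < i4; omega⟩))
      (Or.inr (Or.inl ⟨by omega, by omega⟩))
      (Or.inl (Or.inl ⟨by show i2 < i3; omega, by show i3 < i4; omega⟩))
      (Or.inr (Or.inr ⟨by omega, by omega⟩))⟩
    · have h1 : a ∉ ({b,c,d} : Finset (Fin n)) := by
        simp only [Finset.mem_insert, Finset.mem_singleton, Fin.ext_iff]
        push_neg
        refine ⟨by show i1 ≠ i2; omega, by show i1 ≠ i3; omega, by show i1 ≠ i4; omega⟩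
      have h2 : b ∉ ({c,d} : Finset (Fin n)) := by
        simp only [Finset.mem_insert, Finset.mem_singleton, Fin.ext_iff]
        push_neg
        refine ⟨by show i2 ≠ i3; omega, by show i2 ≠ i4; omega⟩
      have h3 : c ∉ ({d} : Finset (Fin n)) := by
        simp only [Finset.mem_singleton, Fin.ext_iff]
        show i3 ≠ i4; omega
      rw [Finset.card_insert_of_notMem h1, Finset.card_insert_of_notMem h2,
        Finset.card_insert_of_notMem h3, Finset.card_singleton]

end Quad

section ER

variable {π : Equiv.Perm (Fin n)} {X : Finset (Fin n)}

/-- `a` lies in the cell of `u` w.r.t. `X` in coordinate `c`. -/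
def Cell (c : Fin n → ℕ) (X : Finset (Fin n)) (u a : Fin n) : Prop :=
  ∀ x ∈ X, x ≠ u → (c x < c a ↔ c x < c u)

def CellMem (π : Equiv.Perm (Fin n)) (X : Finset (Fin n)) (u a : Fin n) : Prop :=
  a ∉ X ∧ u ∈ X ∧ Cell P X u a ∧ Cell (V π) X u a

def FMem (π : Equiv.Perm (Fin n)) (X : Finset (Fin n)) (a : Fin n) : Prop :=
  a ∉ X ∧ ∀ s ∈ X, ∀ t ∈ X, ¬ Sep π a s t

lemma ne_of_btw1 {c : Fin n → ℕ} {z s t : Fin n} (h : Btw c z s t) : c z ≠ c s := by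
  unfold Btw at h; omega

lemma ne_of_btw2 {c : Fin n → ℕ} {z s t : Fin n} (h : Btw c z s t) : c z ≠ c t := by
  unfold Btw at h; omega

/-- classification of outside points -/
lemma classify (hX : SOn π X) (ha : a ∉ X)
    (h : ¬ SOn π (insert a X)) : FMem π X a ∨ ∃ u, CellMem π X u a := by
  unfold SOn at h
  push_neg at h
  obtain ⟨S, hblk, hc1, hc2⟩ := h
  have hB' : IsBlk π X (S ∩ X) := hblk.inter (Finset.subset_insert a X)
  rcases hX _ hB' with h1 | h1
  · -- S ∩ X small, so S = {a, x}
    have haS : a ∈ S := by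
      by_contra haS
      have hsub : S ⊆ X := fun y hy => by
        rcases Finset.mem_insert.1 (hblk.1 hy) with rfl | h2
        · exact absurd hy haS
        · exact h2
      have heq : S ∩ X = S := Finset.inter_eq_left.2 hsub
      rw [heq] at h1
      omega
    obtain ⟨s, hs, t, ht, hst⟩ := Finset.one_lt_card.1 (by omega : 1 < S.card)
    have hx : ∃ x, x ∈ S ∧ x ∈ X := by
      rcases Finset.mem_insert.1 (hblk.1 hs) with rfl | h2
      · rcases Finset.mem_insert.1 (hblk.1 ht) with rfl | h3
        · exact absurd rfl hst
        · exact ⟨t, ht, h3⟩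
      · exact ⟨s, hs, h2⟩
    obtain ⟨x, hxS, hxX⟩ := hx
    right
    refine ⟨x, ha, hxX, ?_, ?_⟩
    · intro y hy hyx
      have hyS : y ∉ S := by
        intro hyS
        have h2 : y ∈ S ∩ X := Finset.mem_inter.2 ⟨hyS, hy⟩
        have h3 : x ∈ S ∩ X := Finset.mem_inter.2 ⟨hxS, hxX⟩
        have : 1 < (S ∩ X).card := Finset.one_lt_card.2 ⟨y, h2, x, h3, hyx⟩
        omega
      have hns := hblk.2 y (Finset.mem_insert_of_mem hy) hyS a haS x hxS
      have hnP : ¬ Btw P y a x := fun hb => hns (Or.inl hb)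
      have hnV : ¬ Btw (V π) y a x := fun hb => hns (Or.inr hb)
      have hya : y ≠ a := fun h => ha (h ▸ hy)
      exact (notBtw_iff P_inj hya hyx).1 hnP
    · intro y hy hyx
      have hyS : y ∉ S := by
        intro hyS
        have h2 : y ∈ S ∩ X := Finset.mem_inter.2 ⟨hyS, hy⟩
        have h3 : x ∈ S ∩ X := Finset.mem_inter.2 ⟨hxS, hxX⟩
        have : 1 < (S ∩ X).card := Finset.one_lt_card.2 ⟨y, h2, x, h3, hyx⟩
        omega
      have hns := hblk.2 y (Finset.mem_insert_of_mem hy) hyS a haS x hxS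
      have hnV : ¬ Btw (V π) y a x := fun hb => hns (Or.inr hb)
      have hya : y ≠ a := fun h => ha (h ▸ hy)
      exact (notBtw_iff (V_inj π) hya hyx).1 hnV
  · -- S ∩ X = X, so X ⊆ S
    have hXS : X ⊆ S := by
      intro x hx
      have : x ∈ S ∩ X := h1.symm ▸ hx
      exact (Finset.mem_inter.1 this).1
    have haS : a ∉ S := by
      intro haS
      apply hc2
      apply Finset.Subset.antisymm hblk.1
      intro y hy
      rcases Finset.mem_insert.1 hy with rfl | h2
      · exact haS
      · exact hXS h2
    left
    refine ⟨ha, fun s hs t ht hsep => ?_⟩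
    exact hblk.2 a (Finset.mem_insert_self a X) haS s (hXS hs) t (hXS ht) hsep

/-- extremal in both coordinates is impossible -/
lemma extr_core {c d : Fin n → ℕ} {u : Fin n}
    (hsep_iff : ∀ z s t : Fin n, Sep π z s t ↔ (Btw c z s t ∨ Btw d z s t))
    (hX : SOn π X) (h3 : 3 ≤ X.card) (hu : u ∈ X)
    (hcext : (∀ x ∈ X, x ≠ u → c x < c u) ∨ (∀ x ∈ X, x ≠ u → c u < c x))
    (hdext : (∀ x ∈ X, x ≠ u → d x < d u) ∨ (∀ x ∈ X, x ≠ u → d u < d x)) : False := by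
  have hblk : IsBlk π X (X.erase u) := by
    refine ⟨X.erase_subset u, fun z hz hzS s hs t ht hsep => ?_⟩
    have hzu : z = u := by
      by_contra h
      exact hzS (Finset.mem_erase.2 ⟨h, hz⟩)
    subst hzu
    obtain ⟨hs1, hs2⟩ := Finset.mem_erase.1 hs
    obtain ⟨ht1, ht2⟩ := Finset.mem_erase.1 ht
    rcases (hsep_iff z s t).1 hsep with hb | hb
    · rcases hcext with h | h
      · have := h s hs2 hs1; have := h t ht2 ht1; unfold Btw at hb; omega
      · have := h s hs2 hs1; have := h t ht2 ht1; unfold Btw at hb; omega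
    · rcases hdext with h | h
      · have := h s hs2 hs1; have := h t ht2 ht1; unfold Btw at hb; omega
      · have := h s hs2 hs1; have := h t ht2 ht1; unfold Btw at hb; omega
  rcases hX _ hblk with h1 | h1
  · rw [Finset.card_erase_of_mem hu] at h1; omega
  · have := Finset.card_erase_of_mem hu
    rw [h1] at this
    omega

/-- inside a cell and separating no pair of `X` forces extremality (one coordinate) -/
lemma cellside {c : Fin n → ℕ} {u a : Fin n} (hc : Function.Injective c)
    (hCell : Cell c X u a) (ha : a ∉ X) (hu : u ∈ X)
    (hnosep : ∀ s ∈ X, ∀ t ∈ X, ¬ Btw c a s t) :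
    (∀ x ∈ X, x ≠ u → c x < c u) ∨ (∀ x ∈ X, x ≠ u → c u < c x) := by
  have hau : a ≠ u := fun h => ha (h ▸ hu)
  have hau' : c a ≠ c u := fun h => hau (hc h)
  rcases Nat.lt_or_ge (c u) (c a) with hlt | hge
  · left
    intro x hx hxu
    by_contra hcon
    have hxu' : c x ≠ c u := fun h => hxu (hc h)
    have h1 : c u < c x := by omega
    have h2 := hCell x hx hxu
    have hxa : c x ≠ c a := fun h => ha ((hc h) ▸ hx)
    exact hnosep u hu x hx (Or.inl ⟨hlt, by omega⟩)
  · right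
    intro x hx hxu
    by_contra hcon
    have hxu' : c x ≠ c u := fun h => hxu (hc h)
    have h1 : c x < c u := by omega
    have h2 := hCell x hx hxu
    have hxa : c x ≠ c a := fun h => ha ((hc h) ▸ hx)
    exact hnosep x hx u hu (Or.inl ⟨by omega, by omega⟩)

/-- a cell point separates some pair of `X` -/
lemma cell_seps (hX : SOn π X) (h3 : 3 ≤ X.card) {u a : Fin n}
    (hC : CellMem π X u a) : ∃ s ∈ X, ∃ t ∈ X, Sep π a s t := by
  by_contra hcon
  push_neg at hcon
  obtain ⟨ha, hu, hcP, hcV⟩ := hC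
  have hnP : ∀ s ∈ X, ∀ t ∈ X, ¬ Btw P a s t := fun s hs t ht hb => hcon s hs t ht (Or.inl hb)
  have hnV : ∀ s ∈ X, ∀ t ∈ X, ¬ Btw (V π) a s t := fun s hs t ht hb => hcon s hs t ht (Or.inr hb)
  exact extr_core (fun _ _ _ => Iff.rfl) hX h3 hu
    (cellside P_inj hcP ha hu hnP) (cellside (V_inj π) hcV ha hu hnV)

/-- any two points of a simple `X` (card ≥ 3) are separated within `X` -/
lemma sepX (hX : SOn π X) (h3 : 3 ≤ X.card) {x y : Fin n}
    (hx : x ∈ X) (hy : y ∈ X) (hxy : x ≠ y) : ∃ z ∈ X, Sep π z x y := by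
  by_contra hcon
  push_neg at hcon
  have hblk : IsBlk π X {x, y} := by
    have hsub : ({x, y} : Finset (Fin n)) ⊆ X := by
      intro w hw
      rcases Finset.mem_insert.1 hw with rfl | hw2
      · exact hx
      · rw [Finset.mem_singleton.1 hw2]; exact hy
    refine ⟨hsub, fun z hz hzS s hs t ht hsep => ?_⟩
    rcases Finset.mem_insert.1 hs with rfl | hs2 <;>
      rcases Finset.mem_insert.1 ht with rfl | ht2
    · rcases hsep with hb | hb <;> (unfold Btw at hb; omega)
    · obtain rfl := Finset.mem_singleton.1 ht2
      exact hcon z hz hsep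
    · obtain rfl := Finset.mem_singleton.1 hs2
      exact hcon z hz hsep.symm
    · obtain rfl := Finset.mem_singleton.1 hs2
      obtain rfl := Finset.mem_singleton.1 ht2
      rcases hsep with hb | hb <;> (unfold Btw at hb; omega)
  rcases hX _ hblk with h1 | h1
  · rw [Finset.card_insert_of_notMem (by simpa using hxy), Finset.card_singleton] at h1
    omega
  · rw [← h1] at h3
    rw [Finset.card_insert_of_notMem (by simpa using hxy), Finset.card_singleton] at h3
    omega

end ER

section ER2

variable {π : Equiv.Perm (Fin n)} {X : Finset (Fin n)} {u w a b f x z : Fin n}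

lemma gg {c : Fin n → ℕ} (hCell : Cell c X u a) (hb : Btw c z u a) : Cell c X u z := by
  intro y hy hyu
  have h1 := hCell y hy hyu
  unfold Btw at hb
  omega

lemma gd {c : Fin n → ℕ} (hc : Function.Injective c) (hu : u ∈ X) (hw : w ∈ X)
    (huw : u ≠ w) (hz : z ∉ X) (h1 : Cell c X u z) (h2 : Cell c X w z) :
    Btw c z u w ∧ ∀ x ∈ X, ¬ Btw c x u w := by
  have hzu : c z ≠ c u := fun h => hz ((hc h) ▸ hu)
  have hzw : c z ≠ c w := fun h => hz ((hc h) ▸ hw)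
  have huw' : c u ≠ c w := fun h => huw (hc h)
  have e1 := h2 u hu huw
  have e2 := h1 w hw (Ne.symm huw)
  constructor
  · unfold Btw; omega
  · intro y hy hb
    by_cases hyu : y = u
    · subst hyu; unfold Btw at hb; omega
    by_cases hyw : y = w
    · subst hyw; unfold Btw at hb; omega
    have f1 := h1 y hy hyu
    have f2 := h2 y hy hyw
    unfold Btw at hb
    omega

lemma sepXA (hX : SOn π X) (h3 : 3 ≤ X.card) (hC : CellMem π X u a)
    (hx : x ∈ X) (hxu : x ≠ u) : ∃ y ∈ X, y ≠ x ∧ Sep π y x a := by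
  obtain ⟨ha, hu, hcP, hcV⟩ := hC
  obtain ⟨z, hz, hsep⟩ := sepX hX h3 hx hu hxu
  rcases hsep with hb | hb
  · have hzx : z ≠ x := fun h => (ne_of_btw1 hb) (congrArg P h)
    have hzu : z ≠ u := fun h => (ne_of_btw2 hb) (congrArg P h)
    have hiff := hcP z hz hzu
    have hza : P z ≠ P a := fun h => ha ((P_inj h) ▸ hz)
    refine ⟨z, hz, hzx, Or.inl ?_⟩
    unfold Btw at hb ⊢
    omega
  · have hzx : z ≠ x := fun h => (ne_of_btw1 hb) (congrArg (V π) h)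
    have hzu : z ≠ u := fun h => (ne_of_btw2 hb) (congrArg (V π) h)
    have hiff := hcV z hz hzu
    have hza : V π z ≠ V π a := fun h => ha ((V_inj π h) ▸ hz)
    refine ⟨z, hz, hzx, Or.inr ?_⟩
    unfold Btw at hb ⊢
    omega

lemma onesidedF {c : Fin n → ℕ} (hc : Function.Injective c)
    (hns : ∀ s ∈ X, ∀ t ∈ X, ¬ Btw c f s t) (hf : f ∉ X) :
    (∀ s ∈ X, c s < c f) ∨ (∀ s ∈ X, c f < c s) := by
  by_cases h : ∀ s ∈ X, c s < c f
  · exact Or.inl h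
  · right
    push_neg at h
    obtain ⟨s0, hs0, hge⟩ := h
    have hne0 : c f ≠ c s0 := fun h => hf ((hc h) ▸ hs0)
    intro s hs
    have hne : c f ≠ c s := fun h => hf ((hc h) ▸ hs)
    by_contra hcon
    exact hns s hs s0 hs0 (Or.inl ⟨by omega, by omega⟩)

lemma sepXF (hX : SOn π X) (h3 : 3 ≤ X.card) (hF : FMem π X f) (hx : x ∈ X) :
    ∃ y ∈ X, y ≠ x ∧ Sep π y x f := by
  obtain ⟨hf, hns⟩ := hF
  have hnsP : ∀ s ∈ X, ∀ t ∈ X, ¬ Btw P f s t := fun s hs t ht hb => hns s hs t ht (Or.inl hb)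
  have hnsV : ∀ s ∈ X, ∀ t ∈ X, ¬ Btw (V π) f s t := fun s hs t ht hb => hns s hs t ht (Or.inr hb)
  have hsP := onesidedF P_inj hnsP hf
  have hsV := onesidedF (V_inj π) hnsV hf
  by_contra hcon
  push_neg at hcon
  have hex : ∀ (c : Fin n → ℕ), Function.Injective c →
      ((∀ s ∈ X, c s < c f) ∨ (∀ s ∈ X, c f < c s)) →
      (∀ y ∈ X, y ≠ x → ¬ Btw c y x f) →
      ((∀ y ∈ X, y ≠ x → c y < c x) ∨ (∀ y ∈ X, y ≠ x → c x < c y)) := by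
    intro c hc hside hnb
    rcases hside with hs | hs
    · left
      intro y hy hyx
      by_contra hcon2
      have hne : c y ≠ c x := fun h => hyx (hc h)
      have h1 := hs y hy
      exact hnb y hy hyx (Or.inl ⟨by omega, h1⟩)
    · right
      intro y hy hyx
      by_contra hcon2
      have hne : c y ≠ c x := fun h => hyx (hc h)
      have h1 := hs y hy
      exact hnb y hy hyx (Or.inr ⟨h1, by omega⟩)
  have hnbP : ∀ y ∈ X, y ≠ x → ¬ Btw P y x f := fun y hy hyx hb => hcon y hy hyx (Or.inl hb)
  have hnbV : ∀ y ∈ X, y ≠ x → ¬ Btw (V π) y x f := fun y hy hyx hb => hcon y hy hyx (Or.inr hb)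
  exact extr_core (fun _ _ _ => Iff.rfl) hX h3 hx
    (hex P P_inj hsP hnbP) (hex (V π) (V_inj π) hsV hnbV)

lemma sepAF_core {c d : Fin n → ℕ} (hc : Function.Injective c) (hd : Function.Injective d)
    (hsep_iff : ∀ z s t : Fin n, Sep π z s t ↔ (Btw c z s t ∨ Btw d z s t))
    (hX : SOn π X) (h3 : 3 ≤ X.card) (hu : u ∈ X) (ha : a ∉ X) (hf : f ∉ X)
    (hCc : Cell c X u a) (hCd : Cell d X u a)
    (hns : ∀ s ∈ X, ∀ t ∈ X, ¬ Sep π f s t)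
    (hb : Btw c f u a) : ∃ y ∈ X, Sep π y a f := by
  have hnsc : ∀ s ∈ X, ∀ t ∈ X, ¬ Btw c f s t :=
    fun s hs t ht hbb => hns s hs t ht ((hsep_iff _ _ _).2 (Or.inl hbb))
  have hnsd : ∀ s ∈ X, ∀ t ∈ X, ¬ Btw d f s t :=
    fun s hs t ht hbb => hns s hs t ht ((hsep_iff _ _ _).2 (Or.inr hbb))
  have hsidec := onesidedF hc hnsc hf
  have hsided := onesidedF hd hnsd hf
  have hcu : Cell c X u f := gg hCc hb
  have hcext : (∀ x ∈ X, x ≠ u → c x < c u) ∨ (∀ x ∈ X, x ≠ u → c u < c x) := by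
    rcases hsidec with hs | hs
    · left
      intro x hx hxu
      have h1 := hcu x hx hxu
      have h2 := hs x hx
      omega
    · right
      intro x hx hxu
      have h1 := hcu x hx hxu
      have h2 := hs x hx
      have hne : c x ≠ c u := fun h => hxu (hc h)
      omega
  rcases hsided with hs | hs
  · obtain ⟨xs, hxs, hmax⟩ := X.exists_max_image d ⟨u, hu⟩
    by_cases hxu : xs = u
    · exfalso
      subst hxu
      apply extr_core hsep_iff hX h3 hxs hcext
      left
      intro x hx hxu2
      have := hmax x hx
      have hne : d x ≠ d xs := fun h => hxu2 (hd h)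
      omega
    · refine ⟨xs, hxs, (hsep_iff _ _ _).2 (Or.inr ?_)⟩
      have h1 := hCd xs hxs hxu
      have h2 := hmax u hu
      have hne1 : d xs ≠ d u := fun h => hxu (hd h)
      have hne2 : d a ≠ d xs := fun h => ha ((hd h) ▸ hxs)
      have h3' := hs xs hxs
      unfold Btw
      omega
  · obtain ⟨xs, hxs, hmin⟩ := X.exists_min_image d ⟨u, hu⟩
    by_cases hxu : xs = u
    · exfalso
      subst hxu
      apply extr_core hsep_iff hX h3 hxs hcext
      right
      intro x hx hxu2
      have := hmin x hx
      have hne : d x ≠ d xs := fun h => hxu2 (hd h)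
      omega
    · refine ⟨xs, hxs, (hsep_iff _ _ _).2 (Or.inr ?_)⟩
      have h1 := hCd xs hxs hxu
      have h2 := hmin u hu
      have hne1 : d xs ≠ d u := fun h => hxu (hd h)
      have hne2 : d a ≠ d xs := fun h => ha ((hd h) ▸ hxs)
      have h3' := hs xs hxs
      unfold Btw
      omega

lemma sepAF (hX : SOn π X) (h3 : 3 ≤ X.card) (hC : CellMem π X u a) (hF : FMem π X f)
    (hsep : Sep π f u a) : ∃ y ∈ X, Sep π y a f := by
  obtain ⟨ha, hu, hcP, hcV⟩ := hC
  obtain ⟨hf, hns⟩ := hF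
  rcases hsep with hb | hb
  · exact sepAF_core P_inj (V_inj π) (fun _ _ _ => Iff.rfl) hX h3 hu ha hf hcP hcV hns hb
  · exact sepAF_core (V_inj π) P_inj (fun z s t => by unfold Sep; exact or_comm)
      hX h3 hu ha hf hcV hcP hns hb

lemma sepAB_core {c d : Fin n → ℕ} (hc : Function.Injective c) (hd : Function.Injective d)
    (hsep_iff : ∀ z s t : Fin n, Sep π z s t ↔ (Btw c z s t ∨ Btw d z s t))
    (hX : SOn π X) (h3 : 3 ≤ X.card) (hu : u ∈ X) (hw : w ∈ X) (huw : u ≠ w)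
    (ha : a ∉ X) (hb : b ∉ X)
    (hCac : Cell c X u a) (hCad : Cell d X u a) (hCbc : Cell c X w b) (hCbd : Cell d X w b)
    (hbtw : Btw c b u a) : ∃ y ∈ X, Sep π y a b := by
  have hCbu : Cell c X u b := gg hCac hbtw
  have hgd := gd hc hu hw huw hb hCbu hCbc
  by_cases hex : ∃ x ∈ X, Btw d x u w
  · obtain ⟨y, hy, hby⟩ := hex
    have hyu : y ≠ u := fun h => (ne_of_btw1 hby) (congrArg d h)
    have hyw : y ≠ w := fun h => (ne_of_btw2 hby) (congrArg d h)
    have h1 := hCad y hy hyu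
    have h2 := hCbd y hy hyw
    have hna : d a ≠ d y := fun h => ha ((hd h) ▸ hy)
    have hnb : d b ≠ d y := fun h => hb ((hd h) ▸ hy)
    refine ⟨y, hy, (hsep_iff _ _ _).2 (Or.inr ?_)⟩
    unfold Btw at hby ⊢
    omega
  · push_neg at hex
    exfalso
    have hsub : ({u, w} : Finset (Fin n)) ⊆ X := by
      intro q hq
      rcases Finset.mem_insert.1 hq with rfl | hq2
      · exact hu
      · rw [Finset.mem_singleton.1 hq2]; exact hw
    have hblk : IsBlk π X {u, w} := by
      refine ⟨hsub, fun q hq hqS s hs t ht hsep => ?_⟩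
      rcases (hsep_iff q s t).1 hsep with hbb | hbb
      · rcases Finset.mem_insert.1 hs with rfl | hs2 <;>
          rcases Finset.mem_insert.1 ht with rfl | ht2
        · unfold Btw at hbb; omega
        · obtain rfl := Finset.mem_singleton.1 ht2
          exact hgd.2 q hq hbb
        · obtain rfl := Finset.mem_singleton.1 hs2
          exact hgd.2 q hq hbb.symm
        · obtain rfl := Finset.mem_singleton.1 hs2
          obtain rfl := Finset.mem_singleton.1 ht2
          unfold Btw at hbb; omega
      · rcases Finset.mem_insert.1 hs with rfl | hs2 <;>
          rcases Finset.mem_insert.1 ht with rfl | ht2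
        · unfold Btw at hbb; omega
        · obtain rfl := Finset.mem_singleton.1 ht2
          exact hex q hq hbb
        · obtain rfl := Finset.mem_singleton.1 hs2
          exact hex q hq hbb.symm
        · obtain rfl := Finset.mem_singleton.1 hs2
          obtain rfl := Finset.mem_singleton.1 ht2
          unfold Btw at hbb; omega
    rcases hX _ hblk with h1 | h1
    · rw [Finset.card_insert_of_notMem (by simpa using huw), Finset.card_singleton] at h1
      omega
    · rw [← h1] at h3
      rw [Finset.card_insert_of_notMem (by simpa using huw), Finset.card_singleton] at h3
      omega

lemma sepAB (hX : SOn π X) (h3 : 3 ≤ X.card) (hCa : CellMem π X u a) (hCb : CellMem π X w b)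
    (huw : u ≠ w) (hsep : Sep π b u a) : ∃ y ∈ X, Sep π y a b := by
  obtain ⟨ha, hu, haP, haV⟩ := hCa
  obtain ⟨hbX, hw, hbP, hbV⟩ := hCb
  rcases hsep with hbb | hbb
  · exact sepAB_core P_inj (V_inj π) (fun _ _ _ => Iff.rfl) hX h3 hu hw huw ha hbX
      haP haV hbP hbV hbb
  · exact sepAB_core (V_inj π) P_inj (fun z s t => by unfold Sep; exact or_comm) hX h3 hu hw huw
      ha hbX haV haP hbV hbP hbb

lemma cross_geom_core {c : Fin n → ℕ} (hc : Function.Injective c)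
    (hu : u ∈ X) (hw : w ∈ X) (huw : u ≠ w) (ha : a ∉ X) (hz : z ∉ X)
    (hCac : Cell c X u a) (hCzc : Cell c X w z)
    (hbtw : Btw c z u a) : Btw c a w z := by
  have hCzu : Cell c X u z := gg hCac hbtw
  have hgd := (gd hc hu hw huw hz hCzu hCzc).1
  have hiff := hCac w hw (Ne.symm huw)
  have hne : c a ≠ c w := fun h => ha ((hc h) ▸ hw)
  unfold Btw at hbtw hgd ⊢
  omega

lemma cross_geom (hCa : CellMem π X u a) (hCz : CellMem π X w z) (huw : u ≠ w)
    (hsep : Sep π z u a) : Sep π a w z := by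
  obtain ⟨ha, hu, haP, haV⟩ := hCa
  obtain ⟨hzX, hw, hzP, hzV⟩ := hCz
  rcases hsep with hbb | hbb
  · exact Or.inl (cross_geom_core P_inj hu hw huw ha hzX haP hzP hbb)
  · exact Or.inr (cross_geom_core (V_inj π) hu hw huw ha hzX haV hzV hbb)

end ER2

section ER3

variable {π : Equiv.Perm (Fin n)} {X : Finset (Fin n)} {u w a b f : Fin n}

lemma sep_ne1 {z s t : Fin n} (h : Sep π z s t) : z ≠ s := by
  rcases h with hb | hb
  · exact fun he => (ne_of_btw1 hb) (congrArg P he)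
  · exact fun he => (ne_of_btw1 hb) (congrArg (V π) he)

lemma sep_ne2 {z s t : Fin n} (h : Sep π z s t) : z ≠ t := by
  rcases h with hb | hb
  · exact fun he => (ne_of_btw2 hb) (congrArg P he)
  · exact fun he => (ne_of_btw2 hb) (congrArg (V π) he)

lemma R2good (hX : SOn π X) (h3 : 3 ≤ X.card) (hC : CellMem π X u a) (hF : FMem π X f)
    (hsep : Sep π f u a) : SOn π (insert f (insert a X)) := by
  classical
  have haX : a ∉ X := hC.1
  have hu : u ∈ X := hC.2.1
  have hfX : f ∉ X := hF.1
  have hfa : f ≠ a := sep_ne2 hsep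
  have hXY : X ⊆ insert f (insert a X) := fun x hx =>
    Finset.mem_insert_of_mem (Finset.mem_insert_of_mem hx)
  have haY : a ∈ insert f (insert a X) := Finset.mem_insert_of_mem (Finset.mem_insert_self a X)
  have hfY : f ∈ insert f (insert a X) := Finset.mem_insert_self _ _
  intro S hS
  rcases Nat.lt_or_ge S.card 2 with h1 | h1
  · exact Or.inl (by omega)
  right
  by_contra hne
  exfalso
  have hB' := hS.inter hXY
  rcases hX _ hB' with hsmall | hfull
  · -- (S ∩ X).card ≤ 1
    by_cases haS : a ∈ S <;> by_cases hfS : f ∈ S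
    · -- a, f ∈ S
      rcases (S ∩ X).eq_empty_or_nonempty with hemp | ⟨x0, hx0⟩
      · obtain ⟨y, hy, hsep2⟩ := sepAF hX h3 hC hF hsep
        have hyS : y ∉ S := fun hyS => by
          have : y ∈ S ∩ X := Finset.mem_inter.2 ⟨hyS, hy⟩
          rw [hemp] at this
          exact absurd this (Finset.notMem_empty y)
        exact hS.2 y (hXY hy) hyS a haS f hfS hsep2
      · have hx0S : x0 ∈ S := (Finset.mem_inter.1 hx0).1
        have hx0X : x0 ∈ X := (Finset.mem_inter.1 hx0).2
        obtain ⟨y, hy, hyx, hsep2⟩ := sepXF hX h3 hF hx0X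
        have hyS : y ∉ S := fun hyS => by
          have h2 : y ∈ S ∩ X := Finset.mem_inter.2 ⟨hyS, hy⟩
          have : 1 < (S ∩ X).card := Finset.one_lt_card.2 ⟨y, h2, x0, hx0, hyx⟩
          omega
        exact hS.2 y (hXY hy) hyS x0 hx0S f hfS hsep2
    · -- a ∈ S, f ∉ S
      have hx0 : ∃ x0, x0 ∈ S ∧ x0 ∈ X := by
        obtain ⟨s, hs, t, ht, hst⟩ := Finset.one_lt_card.1 (by omega : 1 < S.card)
        have hmem : ∀ q, q ∈ S → q = a ∨ q ∈ X := by
          intro q hq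
          rcases Finset.mem_insert.1 (hS.1 hq) with rfl | h2
          · exact absurd hq hfS
          · rcases Finset.mem_insert.1 h2 with rfl | h3
            · exact Or.inl rfl
            · exact Or.inr h3
        rcases hmem s hs with rfl | h2
        · rcases hmem t ht with rfl | h3
          · exact absurd rfl hst
          · exact ⟨t, ht, h3⟩
        · exact ⟨s, hs, h2⟩
      obtain ⟨x0, hx0S, hx0X⟩ := hx0
      by_cases hx0u : x0 = u
      · subst hx0u
        exact hS.2 f hfY hfS x0 hx0S a haS hsep
      · obtain ⟨y, hy, hyx, hsep2⟩ := sepXA hX h3 hC hx0X hx0u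
        have hyS : y ∉ S := fun hyS => by
          have h2 : y ∈ S ∩ X := Finset.mem_inter.2 ⟨hyS, hy⟩
          have h4 : x0 ∈ S ∩ X := Finset.mem_inter.2 ⟨hx0S, hx0X⟩
          have : 1 < (S ∩ X).card := Finset.one_lt_card.2 ⟨y, h2, x0, h4, hyx⟩
          omega
        exact hS.2 y (hXY hy) hyS x0 hx0S a haS hsep2
    · -- f ∈ S, a ∉ S
      have hx0 : ∃ x0, x0 ∈ S ∧ x0 ∈ X := by
        obtain ⟨s, hs, t, ht, hst⟩ := Finset.one_lt_card.1 (by omega : 1 < S.card)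
        have hmem : ∀ q, q ∈ S → q = f ∨ q ∈ X := by
          intro q hq
          rcases Finset.mem_insert.1 (hS.1 hq) with rfl | h2
          · exact Or.inl rfl
          · rcases Finset.mem_insert.1 h2 with rfl | h3
            · exact absurd hq haS
            · exact Or.inr h3
        rcases hmem s hs with rfl | h2
        · rcases hmem t ht with rfl | h3
          · exact absurd rfl hst
          · exact ⟨t, ht, h3⟩
        · exact ⟨s, hs, h2⟩
      obtain ⟨x0, hx0S, hx0X⟩ := hx0
      obtain ⟨y, hy, hyx, hsep2⟩ := sepXF hX h3 hF hx0X
      have hyS : y ∉ S := fun hyS => by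
        have h2 : y ∈ S ∩ X := Finset.mem_inter.2 ⟨hyS, hy⟩
        have h4 : x0 ∈ S ∩ X := Finset.mem_inter.2 ⟨hx0S, hx0X⟩
        have : 1 < (S ∩ X).card := Finset.one_lt_card.2 ⟨y, h2, x0, h4, hyx⟩
        omega
      exact hS.2 y (hXY hy) hyS x0 hx0S f hfS hsep2
    · -- neither
      have hsub : S ⊆ X := by
        intro q hq
        rcases Finset.mem_insert.1 (hS.1 hq) with rfl | h2
        · exact absurd hq hfS
        · rcases Finset.mem_insert.1 h2 with rfl | h3
          · exact absurd hq haS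
          · exact h3
      have heq : S ∩ X = S := Finset.inter_eq_left.2 hsub
      rw [heq] at hsmall
      omega
  · -- S ∩ X = X
    have hXS : X ⊆ S := by
      intro x hx
      have : x ∈ S ∩ X := hfull.symm ▸ hx
      exact (Finset.mem_inter.1 this).1
    by_cases haS : a ∈ S
    · by_cases hfS : f ∈ S
      · apply hne
        apply Finset.Subset.antisymm hS.1
        intro y hy
        rcases Finset.mem_insert.1 hy with rfl | h2
        · exact hfS
        · rcases Finset.mem_insert.1 h2 with rfl | h3
          · exact haS
          · exact hXS h3
      · exact hS.2 f hfY hfS u (hXS hu) a haS hsep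
    · obtain ⟨s, hs, t, ht, hsep3⟩ := cell_seps hX h3 hC
      exact hS.2 a haY haS s (hXS hs) t (hXS ht) hsep3

lemma R1good (hX : SOn π X) (h3 : 3 ≤ X.card) (hCa : CellMem π X u a) (hCb : CellMem π X w b)
    (huw : u ≠ w) (hsep1 : Sep π b u a) (hsep2 : Sep π a w b) :
    SOn π (insert b (insert a X)) := by
  classical
  have haX : a ∉ X := hCa.1
  have hu : u ∈ X := hCa.2.1
  have hbX : b ∉ X := hCb.1
  have hw : w ∈ X := hCb.2.1
  have hba : b ≠ a := sep_ne2 hsep1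
  have hXY : X ⊆ insert b (insert a X) := fun x hx =>
    Finset.mem_insert_of_mem (Finset.mem_insert_of_mem hx)
  have haY : a ∈ insert b (insert a X) := Finset.mem_insert_of_mem (Finset.mem_insert_self a X)
  have hbY : b ∈ insert b (insert a X) := Finset.mem_insert_self _ _
  intro S hS
  rcases Nat.lt_or_ge S.card 2 with h1 | h1
  · exact Or.inl (by omega)
  right
  by_contra hne
  exfalso
  have hB' := hS.inter hXY
  rcases hX _ hB' with hsmall | hfull
  · by_cases haS : a ∈ S <;> by_cases hbS : b ∈ S
    · -- a, b ∈ S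
      rcases (S ∩ X).eq_empty_or_nonempty with hemp | ⟨x0, hx0⟩
      · obtain ⟨y, hy, hsepy⟩ := sepAB hX h3 hCa hCb huw hsep1
        have hyS : y ∉ S := fun hyS => by
          have : y ∈ S ∩ X := Finset.mem_inter.2 ⟨hyS, hy⟩
          rw [hemp] at this
          exact absurd this (Finset.notMem_empty y)
        exact hS.2 y (hXY hy) hyS a haS b hbS hsepy
      · have hx0S : x0 ∈ S := (Finset.mem_inter.1 hx0).1
        have hx0X : x0 ∈ X := (Finset.mem_inter.1 hx0).2
        by_cases hx0u : x0 = u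
        · -- pair (u, b): u ≠ w, use sepXA with cell of b
          subst hx0u
          obtain ⟨y, hy, hyx, hsepy⟩ := sepXA hX h3 hCb hx0X huw
          have hyS : y ∉ S := fun hyS => by
            have h2 : y ∈ S ∩ X := Finset.mem_inter.2 ⟨hyS, hy⟩
            have : 1 < (S ∩ X).card := Finset.one_lt_card.2 ⟨y, h2, x0, hx0, hyx⟩
            omega
          exact hS.2 y (hXY hy) hyS x0 hx0S b hbS hsepy
        · obtain ⟨y, hy, hyx, hsepy⟩ := sepXA hX h3 hCa hx0X hx0u
          have hyS : y ∉ S := fun hyS => by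
            have h2 : y ∈ S ∩ X := Finset.mem_inter.2 ⟨hyS, hy⟩
            have : 1 < (S ∩ X).card := Finset.one_lt_card.2 ⟨y, h2, x0, hx0, hyx⟩
            omega
          exact hS.2 y (hXY hy) hyS x0 hx0S a haS hsepy
    · -- a ∈ S, b ∉ S
      have hx0 : ∃ x0, x0 ∈ S ∧ x0 ∈ X := by
        obtain ⟨s, hs, t, ht, hst⟩ := Finset.one_lt_card.1 (by omega : 1 < S.card)
        have hmem : ∀ q, q ∈ S → q = a ∨ q ∈ X := by
          intro q hq
          rcases Finset.mem_insert.1 (hS.1 hq) with rfl | h2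
          · exact absurd hq hbS
          · rcases Finset.mem_insert.1 h2 with rfl | h3
            · exact Or.inl rfl
            · exact Or.inr h3
        rcases hmem s hs with rfl | h2
        · rcases hmem t ht with rfl | h3
          · exact absurd rfl hst
          · exact ⟨t, ht, h3⟩
        · exact ⟨s, hs, h2⟩
      obtain ⟨x0, hx0S, hx0X⟩ := hx0
      by_cases hx0u : x0 = u
      · subst hx0u
        exact hS.2 b hbY hbS x0 hx0S a haS hsep1
      · obtain ⟨y, hy, hyx, hsepy⟩ := sepXA hX h3 hCa hx0X hx0u
        have hyS : y ∉ S := fun hyS => by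
          have h2 : y ∈ S ∩ X := Finset.mem_inter.2 ⟨hyS, hy⟩
          have h4 : x0 ∈ S ∩ X := Finset.mem_inter.2 ⟨hx0S, hx0X⟩
          have : 1 < (S ∩ X).card := Finset.one_lt_card.2 ⟨y, h2, x0, h4, hyx⟩
          omega
        exact hS.2 y (hXY hy) hyS x0 hx0S a haS hsepy
    · -- b ∈ S, a ∉ S
      have hx0 : ∃ x0, x0 ∈ S ∧ x0 ∈ X := by
        obtain ⟨s, hs, t, ht, hst⟩ := Finset.one_lt_card.1 (by omega : 1 < S.card)
        have hmem : ∀ q, q ∈ S → q = b ∨ q ∈ X := by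
          intro q hq
          rcases Finset.mem_insert.1 (hS.1 hq) with rfl | h2
          · exact Or.inl rfl
          · rcases Finset.mem_insert.1 h2 with rfl | h3
            · exact absurd hq haS
            · exact Or.inr h3
        rcases hmem s hs with rfl | h2
        · rcases hmem t ht with rfl | h3
          · exact absurd rfl hst
          · exact ⟨t, ht, h3⟩
        · exact ⟨s, hs, h2⟩
      obtain ⟨x0, hx0S, hx0X⟩ := hx0
      by_cases hx0w : x0 = w
      · subst hx0w
        exact hS.2 a haY haS x0 hx0S b hbS hsep2
      · obtain ⟨y, hy, hyx, hsepy⟩ := sepXA hX h3 hCb hx0X hx0w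
        have hyS : y ∉ S := fun hyS => by
          have h2 : y ∈ S ∩ X := Finset.mem_inter.2 ⟨hyS, hy⟩
          have h4 : x0 ∈ S ∩ X := Finset.mem_inter.2 ⟨hx0S, hx0X⟩
          have : 1 < (S ∩ X).card := Finset.one_lt_card.2 ⟨y, h2, x0, h4, hyx⟩
          omega
        exact hS.2 y (hXY hy) hyS x0 hx0S b hbS hsepy
    · have hsub : S ⊆ X := by
        intro q hq
        rcases Finset.mem_insert.1 (hS.1 hq) with rfl | h2
        · exact absurd hq hbS
        · rcases Finset.mem_insert.1 h2 with rfl | h3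
          · exact absurd hq haS
          · exact h3
      have heq : S ∩ X = S := Finset.inter_eq_left.2 hsub
      rw [heq] at hsmall
      omega
  · have hXS : X ⊆ S := by
      intro x hx
      have : x ∈ S ∩ X := hfull.symm ▸ hx
      exact (Finset.mem_inter.1 this).1
    by_cases haS : a ∈ S
    · by_cases hbS : b ∈ S
      · apply hne
        apply Finset.Subset.antisymm hS.1
        intro y hy
        rcases Finset.mem_insert.1 hy with rfl | h2
        · exact hbS
        · rcases Finset.mem_insert.1 h2 with rfl | h3
          · exact haS
          · exact hXS h3
      · exact hS.2 b hbY hbS u (hXS hu) a haS hsep1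
    · obtain ⟨s, hs, t, ht, hsepy⟩ := cell_seps hX h3 hCa
      exact hS.2 a haY haS s (hXS hs) t (hXS ht) hsepy

end ER3

section ER4

variable {π : Equiv.Perm (Fin n)} {X : Finset (Fin n)}

lemma er_step (hA : SOn π Finset.univ) (hX : SOn π X) (h3 : 3 ≤ X.card)
    (hXu : X ≠ Finset.univ) :
    ∃ Y, X ⊂ Y ∧ SOn π Y ∧ Y.card ≤ X.card + 2 := by
  classical
  by_cases h1 : ∃ c, c ∉ X ∧ SOn π (insert c X)
  · obtain ⟨c, hc, hs⟩ := h1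
    refine ⟨insert c X, Finset.ssubset_insert hc, hs, ?_⟩
    rw [Finset.card_insert_of_notMem hc]
    omega
  push_neg at h1
  have hstep1 : ∃ u a0, CellMem π X u a0 := by
    have hnblk : ¬ IsBlk π Finset.univ X := by
      intro hblk
      rcases hA X hblk with hcard | heq
      · omega
      · exact hXu heq
    have hexz : ∃ z, z ∉ X ∧ ∃ s ∈ X, ∃ t ∈ X, Sep π z s t := by
      by_contra hcon
      push_neg at hcon
      apply hnblk
      refine ⟨Finset.subset_univ X, fun z _ hz s hs t ht hsep => ?_⟩
      exact hcon z hz s hs t ht hsep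
    obtain ⟨z, hz, s, hs, t, ht, hsep⟩ := hexz
    rcases classify hX hz (h1 z hz) with hFm | ⟨u, hCm⟩
    · exact absurd hsep (hFm.2 s hs t ht)
    · exact ⟨u, z, hCm⟩
  obtain ⟨u, a0, hC0⟩ := hstep1
  have hu : u ∈ X := hC0.2.1
  by_cases hP : ∃ a z, CellMem π X u a ∧ Sep π z u a ∧ z ∉ X ∧ ¬ CellMem π X u z
  · obtain ⟨a, z, hCa, hsep, hzX, hnCz⟩ := hP
    have haX : a ∉ X := hCa.1
    have hsub : X ⊆ insert z (insert a X) := fun x hx =>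
      Finset.mem_insert_of_mem (Finset.mem_insert_of_mem hx)
    have hss : X ⊂ insert z (insert a X) :=
      (Finset.ssubset_iff_of_subset hsub).2
        ⟨a, Finset.mem_insert_of_mem (Finset.mem_insert_self a X), haX⟩
    have hcard : (insert z (insert a X)).card ≤ X.card + 2 := by
      calc (insert z (insert a X)).card ≤ (insert a X).card + 1 := Finset.card_insert_le _ _
        _ ≤ (X.card + 1) + 1 := by
            have := Finset.card_insert_le a X
            omega
        _ = X.card + 2 := by omega
    rcases classify hX hzX (h1 z hzX) with hFm | ⟨w, hCw⟩
    · exact ⟨insert z (insert a X), hss, R2good hX h3 hCa hFm hsep, hcard⟩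
    · have hwu : w ≠ u := fun h => hnCz (h ▸ hCw)
      have hsep2 : Sep π a w z := cross_geom hCa hCw (Ne.symm hwu) hsep
      exact ⟨insert z (insert a X), hss, R1good hX h3 hCa hCw (Ne.symm hwu) hsep hsep2, hcard⟩
  · exfalso
    push_neg at hP
    set Cu := Finset.univ.filter (fun t => CellMem π X u t) with hCu_def
    set Q := insert u Cu with hQ_def
    have hmemCu : ∀ t, t ∈ Cu ↔ CellMem π X u t := by
      intro t
      rw [hCu_def]
      simp
    have hQblk : IsBlk π Finset.univ Q := by
      refine ⟨Finset.subset_univ _, fun z _ hzQ s hs t ht hsep => ?_⟩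
      have hzu : z ≠ u := fun h => hzQ (h ▸ Finset.mem_insert_self u Cu)
      have hzC : ¬ CellMem π X u z := fun h => hzQ (Finset.mem_insert_of_mem ((hmemCu z).2 h))
      by_cases hzX : z ∈ X
      · have hiP : ∀ q ∈ Q, (P z < P q ↔ P z < P u) := by
          intro q hq
          rcases Finset.mem_insert.1 hq with rfl | hq2
          · exact Iff.rfl
          · exact ((hmemCu q).1 hq2).2.2.1 z hzX hzu
        have hiV : ∀ q ∈ Q, (V π z < V π q ↔ V π z < V π u) := by
          intro q hq
          rcases Finset.mem_insert.1 hq with rfl | hq2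
          · exact Iff.rfl
          · exact ((hmemCu q).1 hq2).2.2.2 z hzX hzu
        rcases hsep with hb | hb
        · have e1 := hiP s hs
          have e2 := hiP t ht
          unfold Btw at hb; omega
        · have e1 := hiV s hs
          have e2 := hiV t ht
          unfold Btw at hb; omega
      · have hgoal : ∃ a', CellMem π X u a' ∧ Sep π z u a' := by
          rcases Finset.mem_insert.1 hs with rfl | hs2 <;>
            rcases Finset.mem_insert.1 ht with rfl | ht2
          · exfalso
            rcases hsep with hb | hb <;> (unfold Btw at hb; omega)
          · exact ⟨t, (hmemCu t).1 ht2, hsep⟩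
          · exact ⟨s, (hmemCu s).1 hs2, hsep.symm⟩
          · have hCs := (hmemCu s).1 hs2
            have hCt := (hmemCu t).1 ht2
            rcases hsep with hb | hb
            · have hzu' : P z ≠ P u := fun h => hzX ((P_inj h) ▸ hu)
              rcases hb with ⟨u1, u2⟩ | ⟨u1, u2⟩ <;>
                rcases Nat.lt_or_ge (P z) (P u) with hside | hside
              · exact ⟨s, hCs, Or.inl (Or.inr ⟨u1, hside⟩)⟩
              · exact ⟨t, hCt, Or.inl (Or.inl ⟨by omega, u2⟩)⟩
              · exact ⟨t, hCt, Or.inl (Or.inr ⟨u1, hside⟩)⟩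
              · exact ⟨s, hCs, Or.inl (Or.inl ⟨by omega, u2⟩)⟩
            · have hzu' : V π z ≠ V π u := fun h => hzX ((V_inj π h) ▸ hu)
              rcases hb with ⟨u1, u2⟩ | ⟨u1, u2⟩ <;>
                rcases Nat.lt_or_ge (V π z) (V π u) with hside | hside
              · exact ⟨s, hCs, Or.inr (Or.inr ⟨u1, hside⟩)⟩
              · exact ⟨t, hCt, Or.inr (Or.inl ⟨by omega, u2⟩)⟩
              · exact ⟨t, hCt, Or.inr (Or.inr ⟨u1, hside⟩)⟩
              · exact ⟨s, hCs, Or.inr (Or.inl ⟨by omega, u2⟩)⟩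
        obtain ⟨a', hCa', hsepa⟩ := hgoal
        exact hzC (hP a' z hCa' hsepa hzX)
    rcases hA Q hQblk with hcard | heq
    · have ha0 : a0 ∈ Cu := (hmemCu a0).2 hC0
      have ha0u : a0 ≠ u := fun h => hC0.1 (h ▸ hu)
      have : 1 < Q.card := Finset.one_lt_card.2
        ⟨u, Finset.mem_insert_self u Cu, a0, Finset.mem_insert_of_mem ha0, Ne.symm ha0u⟩
      omega
    · obtain ⟨x, hx, hxu⟩ := Finset.exists_mem_ne (by omega : 1 < X.card) u
      have hxQ : x ∈ Q := heq ▸ Finset.mem_univ x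
      rcases Finset.mem_insert.1 hxQ with rfl | hq2
      · exact hxu rfl
      · exact ((hmemCu x).1 hq2).1 hx

end ER4

section Ladder

variable {π : Equiv.Perm (Fin n)}

lemma ladder (hA : SOn π Finset.univ) :
    ∀ d (X : Finset (Fin n)), n = X.card + d → SOn π X → 3 ≤ X.card → X.card ≤ n - 2 →
    ∃ Y : Finset (Fin n), SOn π Y ∧ (Y.card = n - 1 ∨ Y.card = n - 2) := by
  intro d
  induction d using Nat.strong_induction_on with
  | _ d IH =>
  intro X hd hX h3 hle
  rcases Nat.lt_or_ge X.card (n - 2) with hlt | hge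
  · have hXu : X ≠ Finset.univ := by
      intro h
      rw [h, Finset.card_univ, Fintype.card_fin] at hlt
      omega
    obtain ⟨Y, hss, hY, hYc⟩ := er_step hA hX h3 hXu
    have hYgt : X.card < Y.card := Finset.card_lt_card hss
    have hYn : Y.card ≤ n := by
      have := Finset.card_le_univ Y
      rwa [Fintype.card_fin] at this
    rcases Nat.lt_or_ge Y.card (n - 1) with hYlt | hYge
    · exact IH (n - Y.card) (by omega) Y (by omega) hY (by omega) (by omega)
    · exact ⟨Y, hY, Or.inl (by omega)⟩
  · exact ⟨X, hX, Or.inr (by omega)⟩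

end Ladder

end SCS



/-- Every simple permutation of length `n > 2` contains a simple
permutation of length `n − 1` or of length `n − 2`. -/
theorem simple_contains_simple_of_length_sub_one_or_two
    {n : ℕ} (hn : 2 < n) (π : Equiv.Perm (Fin n)) (hπ : IsSimplePerm π) :
    (∃ σ : Equiv.Perm (Fin (n - 1)), IsSimplePerm σ ∧ ContainsPat σ π) ∨
    (∃ σ : Equiv.Perm (Fin (n - 2)), IsSimplePerm σ ∧ ContainsPat σ π) := by
    classical
  have hA : SCS.SOn π Finset.univ := SCS.sOn_univ_of_isSimple hπ
  have key : ∃ Y : Finset (Fin n), SCS.SOn π Y ∧ (Y.card = n - 1 ∨ Y.card = n - 2) := by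
    rcases Nat.lt_or_ge n 5 with h5 | h5
    · have h0 : (0 : ℕ) < n := by omega
      have h1 : (1 : ℕ) < n := by omega
      have hne : (⟨0, h0⟩ : Fin n) ≠ ⟨1, h1⟩ := by
        intro h
        have := congrArg Fin.val h
        simp at this
      have hcard : ({⟨0, h0⟩, ⟨1, h1⟩} : Finset (Fin n)).card = 2 := by
        rw [Finset.card_insert_of_notMem (by simpa using hne), Finset.card_singleton]
      refine ⟨_, SCS.sOn_of_card_le_two (le_of_eq hcard), ?_⟩
      rw [hcard]
      omega
    · obtain ⟨Y4, hc4, hY4⟩ := SCS.exists_quad hA h5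
      rcases Nat.lt_or_ge n 7 with h7 | h7
      · exact ⟨Y4, hY4, by omega⟩
      · exact SCS.ladder hA (n - 4) Y4 (by omega) hY4 (by omega) (by omega)
  obtain ⟨Y, hY, hcase⟩ := key
  rcases hcase with hm | hm
  · exact Or.inl (SCS.exists_simple_pattern hY hm)
  · exact Or.inr (SCS.exists_simple_pattern hY hm)
end

section
/- Let C be a permutation class and let n ≥ 3. If C contains no simple permutation of length n−1 and no simple permutation of length n−2, then C contains no simple permutation of length m for any m ≥ n−2. -/
namespace STP

variable {m : ℕ}

/-- strictly between (in either order). -/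
def Btw (x a b : Fin m) : Prop := (a < x ∧ x < b) ∨ (b < x ∧ x < a)

instance {x a b : Fin m} : Decidable (Btw x a b) := by unfold Btw; infer_instance

lemma btw_symm {x a b : Fin m} (h : Btw x a b) : Btw x b a := h.symm

lemma btw_ne_left {x a b : Fin m} (h : Btw x a b) : x ≠ a := by
  rintro rfl
  rcases h with ⟨h1,_⟩|⟨_,h2⟩
  · exact absurd h1 (lt_irrefl _)
  · exact absurd h2 (lt_irrefl _)

lemma not_btw_same {t a : Fin m} : ¬ Btw t a a := by
  rintro (⟨h1, h2⟩ | ⟨h1, h2⟩) <;> exact absurd (h1.trans h2) (lt_irrefl _)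

lemma btw_ne_right {x a b : Fin m} (h : Btw x a b) : x ≠ b := by
  rintro rfl
  rcases h with ⟨_,h2⟩|⟨h1,_⟩
  · exact absurd h2 (lt_irrefl _)
  · exact absurd h1 (lt_irrefl _)

/-- If x is strictly between a and c, and q is any point, then x is strictly between a and q,
or x = q, or x is strictly between q and c. -/
lemma btw_split {x a q c : Fin m} (h : Btw x a c) : Btw x a q ∨ x = q ∨ Btw x q c := by
  rcases h with ⟨h1,h2⟩|⟨h1,h2⟩
  · rcases lt_trichotomy x q with hq|hq|hq
    · exact Or.inl (Or.inl ⟨h1,hq⟩)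
    · exact Or.inr (Or.inl hq)
    · exact Or.inr (Or.inr (Or.inl ⟨hq,h2⟩))
  · rcases lt_trichotomy x q with hq|hq|hq
    · exact Or.inr (Or.inr (Or.inr ⟨h1,hq⟩))
    · exact Or.inr (Or.inl hq)
    · exact Or.inl (Or.inr ⟨hq,h2⟩)

lemma btw_trans_interval {x a q c : Fin m} (h : Btw x a c) (hq : Btw q a c ∨ q = a) :
    Btw x a q ∨ x = q ∨ Btw x q c := btw_split h

variable (π : Equiv.Perm (Fin m))

/-- `i` splits the set `P` (lies strictly inside its position range or value range). -/
def Splits (P : Finset (Fin m)) (i : Fin m) : Prop :=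
  (∃ a ∈ P, ∃ b ∈ P, Btw i a b) ∨ (∃ a ∈ P, ∃ b ∈ P, Btw (π i) (π a) (π b))

/-- `P` is a relative block of `Q`. -/
def RelBlock (Q P : Finset (Fin m)) : Prop :=
  P ⊆ Q ∧ ∀ i ∈ Q, i ∉ P → ¬ Splits π P i

/-- all relative blocks of `Q` are trivial. -/
def SimpleIn (Q : Finset (Fin m)) : Prop :=
  ∀ P : Finset (Fin m), RelBlock π Q P → P.card ≤ 1 ∨ P = Q

/-- no point of `B` lies strictly between `u` and `v` in position or value. -/
def Tied (B : Finset (Fin m)) (u v : Fin m) : Prop :=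
  ∀ x ∈ B, ¬ Btw x u v ∧ ¬ Btw (π x) (π u) (π v)

lemma relBlock_mono {Q Q' P : Finset (Fin m)} (h : RelBlock π Q P) (hP : P ⊆ Q') (hQ : Q' ⊆ Q) :
    RelBlock π Q' P := ⟨hP, fun i hi hip => h.2 i (hQ hi) hip⟩

/-- intersecting a relative block with `B ⊆ Q` gives a relative block of `B`. -/
lemma relBlock_inter {Q P B : Finset (Fin m)} (h : RelBlock π Q P) (hB : B ⊆ Q) :
    RelBlock π B (P ∩ B) := by
  refine ⟨Finset.inter_subset_right, fun i hi hip hsp => ?_⟩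
  by_cases hiP : i ∈ P
  · exact hip (Finset.mem_inter.2 ⟨hiP, hi⟩)
  · refine h.2 i (hB hi) hiP ?_
    rcases hsp with ⟨a, ha, b, hb, hab⟩|⟨a, ha, b, hb, hab⟩
    · exact Or.inl ⟨a, (Finset.mem_inter.1 ha).1, b, (Finset.mem_inter.1 hb).1, hab⟩
    · exact Or.inr ⟨a, (Finset.mem_inter.1 ha).1, b, (Finset.mem_inter.1 hb).1, hab⟩

/-- small sets are simple. -/
lemma simpleIn_of_card_le_two {Q : Finset (Fin m)} (h : Q.card ≤ 2) : SimpleIn π Q := by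
  intro P hP
  rcases Nat.lt_or_ge P.card 2 with h1 | h2
  · exact Or.inl (Nat.lt_succ_iff.1 h1)
  · right
    exact Finset.eq_of_subset_of_card_le hP.1 (le_trans h h2)

/-- image of a Fin-interval under val. -/
lemma image_val_Icc (a b : Fin m) :
    (Finset.Icc a b).image (Fin.val) = Finset.Icc (a : ℕ) (b : ℕ) := by
  ext x
  simp only [Finset.mem_image, Finset.mem_Icc]
  constructor
  · rintro ⟨i, hi, rfl⟩
    exact ⟨hi.1, hi.2⟩
  · rintro ⟨h1, h2⟩
    have hx : x < m := lt_of_le_of_lt h2 b.isLt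
    exact ⟨⟨x, hx⟩, ⟨by exact h1, by exact h2⟩, rfl⟩

/-- a relblock of univ that is nonempty gives an interval. -/
lemma relBlock_univ_interval {P : Finset (Fin m)} (hR : RelBlock π Finset.univ P)
    (hne : P.Nonempty) :
    P = Finset.Icc (P.min' hne) (P.max' hne) ∧
      IsIntervalAt π (P.min' hne) (P.max' hne) := by
  set a := P.min' hne with ha
  set b := P.max' hne with hb
  have haP : a ∈ P := P.min'_mem hne
  have hbP : b ∈ P := P.max'_mem hne
  -- positions contiguous
  have hPI : P = Finset.Icc a b := by
    apply Finset.Subset.antisymm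
    · intro x hx
      exact Finset.mem_Icc.2 ⟨P.min'_le x hx, P.le_max' x hx⟩
    · intro i hi
      rw [Finset.mem_Icc] at hi
      by_contra hiP
      have hia : a ≠ i := fun h => hiP (h ▸ haP)
      have hib : i ≠ b := fun h => hiP (h ▸ hbP)
      exact hR.2 i (Finset.mem_univ i) hiP
        (Or.inl ⟨a, haP, b, hbP, Or.inl ⟨lt_of_le_of_ne hi.1 hia, lt_of_le_of_ne hi.2 hib⟩⟩)
  -- values contiguous
  have hVne : (P.image π).Nonempty := hne.image π
  set c := (P.image π).min' hVne with hc
  set d := (P.image π).max' hVne with hd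
  have hcV : c ∈ P.image π := Finset.min'_mem _ _
  have hdV : d ∈ P.image π := Finset.max'_mem _ _
  have hVI : P.image π = Finset.Icc c d := by
    apply Finset.Subset.antisymm
    · intro x hx
      exact Finset.mem_Icc.2 ⟨Finset.min'_le _ x hx, Finset.le_max' _ x hx⟩
    · intro v hv
      rw [Finset.mem_Icc] at hv
      by_contra hvV
      set j := π.symm v with hj
      have hπj : π j = v := π.apply_symm_apply v
      have hjP : j ∉ P := fun hjP => hvV (hπj ▸ Finset.mem_image_of_mem π hjP)
      obtain ⟨u, huP, hu⟩ := Finset.mem_image.1 hcV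
      obtain ⟨w, hwP, hw⟩ := Finset.mem_image.1 hdV
      have hvc : c ≠ v := fun h => hvV (h ▸ hcV)
      have hvd : v ≠ d := fun h => hvV (h ▸ hdV)
      refine hR.2 j (Finset.mem_univ j) hjP (Or.inr ⟨u, huP, w, hwP, ?_⟩)
      rw [hπj, hu, hw]
      exact Or.inl ⟨lt_of_le_of_ne hv.1 hvc, lt_of_le_of_ne hv.2 hvd⟩
  -- cardinalities
  have cardIcc : ∀ u v : Fin m, (Finset.Icc u v).card = (v : ℕ) + 1 - (u : ℕ) := by
    intro u v
    rw [← Finset.card_image_of_injective (Finset.Icc u v) Fin.val_injective, image_val_Icc,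
      Nat.card_Icc]
  have hcard : P.card = (b : ℕ) - (a : ℕ) + 1 := by
    rw [hPI, cardIcc]
    have : (a : ℕ) ≤ (b : ℕ) := P.min'_le b hbP
    omega
  have hVcard : (P.image π).card = P.card := Finset.card_image_of_injective _ π.injective
  have hdc : (d : ℕ) = (c : ℕ) + ((b : ℕ) - (a : ℕ)) := by
    have h1 : (P.image π).card = (d : ℕ) + 1 - (c : ℕ) := by rw [hVI, cardIcc]
    have hcd : (c : ℕ) ≤ (d : ℕ) := Finset.min'_le _ _ hdV
    omega
  refine ⟨hPI, le_trans (P.min'_le b hbP) le_rfl, (c : ℕ), ?_⟩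
  have : (Finset.Icc a b).image (fun i => (π i : ℕ)) = (P.image π).image Fin.val := by
    rw [hPI, Finset.image_image]; rfl
  rw [this, hVI, image_val_Icc, hdc]

/-- conversely, an interval gives a relblock of univ. -/
lemma interval_relBlock {a b : Fin m} (h : IsIntervalAt π a b) :
    RelBlock π Finset.univ (Finset.Icc a b) := by
  obtain ⟨hab, c, hImg⟩ := h
  refine ⟨Finset.subset_univ _, fun i _ hiP hsp => ?_⟩
  rcases hsp with ⟨u, hu, v, hv, huv⟩ | ⟨u, hu, v, hv, huv⟩
  · rw [Finset.mem_Icc] at hu hv hiP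
    rcases huv with ⟨h1, h2⟩ | ⟨h1, h2⟩
    · exact hiP ⟨le_trans hu.1 (le_of_lt h1), le_trans (le_of_lt h2) hv.2⟩
    · exact hiP ⟨le_trans hv.1 (le_of_lt h1), le_trans (le_of_lt h2) hu.2⟩
  · -- value case: π i lands in the value interval, so i must be inside
    have hmem : ∀ x, x ∈ Finset.Icc a b → (π x : ℕ) ∈ Finset.Icc c (c + ((b:ℕ) - (a:ℕ))) := by
      intro x hx
      rw [← hImg]
      exact Finset.mem_image_of_mem _ hx
    have hu' := hmem u hu
    have hv' := hmem v hv
    rw [Finset.mem_Icc] at hu' hv'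
    have hiv : (π i : ℕ) ∈ Finset.Icc c (c + ((b:ℕ) - (a:ℕ))) := by
      rw [Finset.mem_Icc]
      rcases huv with ⟨h1, h2⟩ | ⟨h1, h2⟩
      · have l1 : (π u : ℕ) < (π i : ℕ) := h1
        have l2 : (π i : ℕ) < (π v : ℕ) := h2
        omega
      · have l1 : (π v : ℕ) < (π i : ℕ) := h1
        have l2 : (π i : ℕ) < (π u : ℕ) := h2
        omega
    rw [← hImg] at hiv
    obtain ⟨j, hj, hji⟩ := Finset.mem_image.1 hiv
    have : j = i := by
      have := Fin.val_injective hji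
      exact π.injective this
    exact hiP (this ▸ hj)

/-- Bridge -/
lemma isSimplePerm_iff_simpleIn_univ : IsSimplePerm π ↔ SimpleIn π Finset.univ := by
  constructor
  · intro hS P hP
    rcases P.eq_empty_or_nonempty with rfl | hne
    · exact Or.inl (by simp)
    obtain ⟨hPI, hInt⟩ := relBlock_univ_interval π hP hne
    rcases hS _ _ hInt with heq | ⟨h0, h1⟩
    · left
      rw [hPI, heq]
      simp
    · right
      rw [hPI]
      ext x
      simp only [Finset.mem_Icc, Finset.mem_univ, iff_true]
      have hm : 0 < m := Fin.pos (P.min' hne)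
      constructor
      · exact Fin.le_def.2 (by rw [h0]; exact Nat.zero_le _)
      · exact Fin.le_def.2 (by rw [h1]; omega)
  · intro hS a b hInt
    have hR := interval_relBlock π hInt
    rcases hS _ hR with hc | hu
    · left
      have hab : a ∈ Finset.Icc a b := Finset.mem_Icc.2 ⟨le_rfl, hInt.1⟩
      have hbb : b ∈ Finset.Icc a b := Finset.mem_Icc.2 ⟨hInt.1, le_rfl⟩
      by_contra hne
      have : ({a, b} : Finset (Fin m)) ⊆ Finset.Icc a b := by
        intro x hx
        rcases Finset.mem_insert.1 hx with rfl | hx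
        · exact hab
        · exact (Finset.mem_singleton.1 hx) ▸ hbb
      have h2 : ({a, b} : Finset (Fin m)).card = 2 := Finset.card_pair hne
      have := Finset.card_le_card this
      omega
    · right
      have hm : 0 < m := a.pos
      have h0 : (⟨0, hm⟩ : Fin m) ∈ Finset.Icc a b := hu ▸ Finset.mem_univ _
      have hl : (⟨m - 1, by omega⟩ : Fin m) ∈ Finset.Icc a b := hu ▸ Finset.mem_univ _
      rw [Finset.mem_Icc] at h0 hl
      have e0 : ((⟨0, hm⟩ : Fin m) : ℕ) = 0 := rfl
      have el : ((⟨m - 1, by omega⟩ : Fin m) : ℕ) = m - 1 := rfl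
      constructor
      · have h := h0.1
        rw [Fin.le_def, e0] at h
        omega
      · have h := hl.2
        rw [Fin.le_def, el] at h
        have hb := b.isLt
        omega



-- appended to main.lean for testing
section Extract

variable {m : ℕ} (π : Equiv.Perm (Fin m))

/-- cardinality of a Fin interval -/
lemma cardIcc (u v : Fin m) : (Finset.Icc u v).card = (v : ℕ) + 1 - (u : ℕ) := by
  rw [← Finset.card_image_of_injective (Finset.Icc u v) Fin.val_injective, image_val_Icc,
    Nat.card_Icc]

lemma Icc_eq_univ_ends {k : ℕ} {a b : Fin k} (hu : Finset.Icc a b = Finset.univ) :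
    (a : ℕ) = 0 ∧ (b : ℕ) = k - 1 := by
  have hm : 0 < k := a.pos
  have h0 : (⟨0, hm⟩ : Fin k) ∈ Finset.Icc a b := hu ▸ Finset.mem_univ _
  have hl : (⟨k - 1, by omega⟩ : Fin k) ∈ Finset.Icc a b := hu ▸ Finset.mem_univ _
  rw [Finset.mem_Icc] at h0 hl
  have e0 : ((⟨0, hm⟩ : Fin k) : ℕ) = 0 := rfl
  have el : ((⟨k - 1, by omega⟩ : Fin k) : ℕ) = k - 1 := rfl
  constructor
  · have h := h0.1; rw [Fin.le_def, e0] at h; omega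
  · have h := hl.2; rw [Fin.le_def, el] at h; have hb := b.isLt; omega

variable (P : Finset (Fin m))

/-- the position enumeration of `P`. -/
noncomputable def posEmb : Fin P.card ≃o {x // x ∈ P} := P.orderIsoOfFin rfl

lemma valSet_card : (P.image π).card = P.card := Finset.card_image_of_injective _ π.injective

/-- the value enumeration. -/
noncomputable def valEmb : Fin P.card ≃o {x // x ∈ P.image π} :=
  (P.image π).orderIsoOfFin (valSet_card π P)

/-- the position map Fin P.card → Fin m. -/
noncomputable def pmap (i : Fin P.card) : Fin m := (posEmb P i : Fin m)

lemma pmap_mem (i : Fin P.card) : pmap P i ∈ P := (posEmb P i).2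

lemma pmap_strictMono : StrictMono (pmap P) :=
  fun _ _ h => (posEmb P).strictMono h

lemma pmap_lt_iff {i j : Fin P.card} : pmap P i < pmap P j ↔ i < j := by
  constructor
  · intro h
    by_contra hle
    push_neg at hle
    rcases lt_or_eq_of_le hle with h' | h'
    · exact absurd (pmap_strictMono P h') (not_lt.2 (le_of_lt h))
    · exact absurd (h' ▸ h) (lt_irrefl _)
  · exact fun h => pmap_strictMono P h

lemma pmap_inj : Function.Injective (pmap P) := (pmap_strictMono P).injective

/-- the extracted subpattern of positions `P`. -/
noncomputable def patt : Equiv.Perm (Fin P.card) :=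
  Equiv.ofBijective
    (fun i => (valEmb π P).symm ⟨π (pmap P i), Finset.mem_image_of_mem π (pmap_mem P i)⟩)
    (by
      rw [Fintype.bijective_iff_injective_and_card]
      refine ⟨fun i j h => ?_, rfl⟩
      have := congrArg (fun x => ((valEmb π P) x : Fin m)) h
      simp only [OrderIso.apply_symm_apply] at this
      exact pmap_inj P (π.injective this))

lemma patt_lt_iff {i j : Fin P.card} :
    patt π P i < patt π P j ↔ π (pmap P i) < π (pmap P j) := by
  unfold patt
  simp only [Equiv.ofBijective_apply]
  exact ((valEmb π P).symm.lt_iff_lt).trans Subtype.mk_lt_mk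

lemma containsPat_patt : ContainsPat (patt π P) π := by
  refine ⟨pmap P, pmap_strictMono P, fun a b => ?_⟩
  rw [patt_lt_iff]

/-- transfer of simplicity to the extracted pattern. -/
lemma isSimplePerm_patt (hP : SimpleIn π P) : IsSimplePerm (patt π P) := by
  intro a b hInt
  have hR : RelBlock (patt π P) Finset.univ (Finset.Icc a b) :=
    interval_relBlock (patt π P) hInt
  set Q : Finset (Fin m) := (Finset.Icc a b).image (pmap P) with hQ
  have hQP : RelBlock π P Q := by
    constructor
    · intro x hx
      obtain ⟨i, _, rfl⟩ := Finset.mem_image.1 hx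
      exact pmap_mem P i
    · intro i hiP hiQ hsp
      set i0 : Fin P.card := (posEmb P).symm ⟨i, hiP⟩ with hi0
      have hpi0 : pmap P i0 = i := by
        unfold pmap
        rw [hi0, OrderIso.apply_symm_apply]
      have hi0R : i0 ∉ Finset.Icc a b := by
        intro hmem
        exact hiQ (Finset.mem_image.2 ⟨i0, hmem, hpi0⟩)
      refine hR.2 i0 (Finset.mem_univ _) hi0R ?_
      rcases hsp with ⟨u, hu, v, hv, huv⟩ | ⟨u, hu, v, hv, huv⟩
      · obtain ⟨u0, hu0, rfl⟩ := Finset.mem_image.1 hu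
        obtain ⟨v0, hv0, rfl⟩ := Finset.mem_image.1 hv
        left
        refine ⟨u0, hu0, v0, hv0, ?_⟩
        rcases huv with ⟨h1, h2⟩ | ⟨h1, h2⟩
        · exact Or.inl ⟨(pmap_lt_iff P).1 (hpi0 ▸ h1), (pmap_lt_iff P).1 (hpi0 ▸ h2)⟩
        · exact Or.inr ⟨(pmap_lt_iff P).1 (hpi0 ▸ h1), (pmap_lt_iff P).1 (hpi0 ▸ h2)⟩
      · obtain ⟨u0, hu0, rfl⟩ := Finset.mem_image.1 hu
        obtain ⟨v0, hv0, rfl⟩ := Finset.mem_image.1 hv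
        right
        refine ⟨u0, hu0, v0, hv0, ?_⟩
        have key : ∀ s t : Fin P.card, patt π P s < patt π P t ↔ π (pmap P s) < π (pmap P t) :=
          fun s t => patt_lt_iff π P
        rcases huv with ⟨h1, h2⟩ | ⟨h1, h2⟩
        · exact Or.inl ⟨(key u0 i0).2 (hpi0 ▸ h1), (key i0 v0).2 (hpi0 ▸ h2)⟩
        · exact Or.inr ⟨(key v0 i0).2 (hpi0 ▸ h1), (key i0 u0).2 (hpi0 ▸ h2)⟩
  have hcardQ : Q.card = (Finset.Icc a b).card :=
    Finset.card_image_of_injective _ (pmap_inj P)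
  rcases hP Q hQP with hle | heq
  · left
    rw [hcardQ, cardIcc] at hle
    have hab : (a : ℕ) ≤ (b : ℕ) := hInt.1
    have : (a : ℕ) = (b : ℕ) := by omega
    exact Fin.val_injective this
  · right
    have : (Finset.Icc a b).card = P.card := by rw [← hcardQ, heq]
    have huniv : Finset.Icc a b = Finset.univ := by
      apply Finset.eq_univ_of_card
      rw [this, Fintype.card_fin]
    exact Icc_eq_univ_ends huniv

end Extract

section GrowUtil

variable {m : ℕ} (π : Equiv.Perm (Fin m))

instance tiedDecidable (B : Finset (Fin m)) (u v : Fin m) : Decidable (Tied π B u v) := by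
  unfold Tied; infer_instance

lemma tied_symm {B : Finset (Fin m)} {u v : Fin m} (h : Tied π B u v) : Tied π B v u :=
  fun x hx => ⟨fun hb => (h x hx).1 (btw_symm hb), fun hb => (h x hx).2 (btw_symm hb)⟩

/-- key transitivity: if no B-point separates i from q nor q from c, and q ∉ B,
then no B-point separates i from c. -/
lemma tied_trans {B : Finset (Fin m)} {i q c : Fin m} (h1 : Tied π B i q) (h2 : Tied π B q c)
    (hq : q ∉ B) : Tied π B i c := by
  intro x hx
  constructor
  · intro hb
    rcases btw_split (q := q) hb with h | h | h
    · exact (h1 x hx).1 h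
    · exact hq (h ▸ hx)
    · exact (h2 x hx).1 h
  · intro hb
    rcases btw_split (q := π q) hb with h | h | h
    · exact (h1 x hx).2 h
    · exact hq (π.injective h ▸ hx)
    · exact (h2 x hx).2 h

/-- a point `y` splitting a tied pair `(z, c)` is not in `B`. -/
lemma split_pair_notMem {B : Finset (Fin m)} {z c y : Fin m} (hzc : Tied π B z c)
    (hysp : Btw y z c ∨ Btw (π y) (π z) (π c)) : y ∉ B := by
  intro hyB
  rcases hysp with h | h
  · exact (hzc y hyB).1 h
  · exact (hzc y hyB).2 h

/-- partner existence: if all one-point extensions of B are non-simple, then every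
splitter of B has a tied partner in B. -/
lemma partner_exists {B : Finset (Fin m)} (hB : SimpleIn π B)
    (hni : ∀ z, z ∉ B → ¬ SimpleIn π (insert z B)) {z : Fin m} (hz : z ∉ B)
    (hzs : Splits π B z) : ∃ c ∈ B, Tied π B z c := by
  have h := hni z hz
  unfold SimpleIn at h
  push_neg at h
  obtain ⟨M, hM, hMcard, hMne⟩ := h
  have hMB : RelBlock π B (M ∩ B) := relBlock_inter π hM (Finset.subset_insert z B)
  rcases hB _ hMB with hle | heq
  · -- M = {z, c}
    have hzM : z ∈ M := by
      by_contra hzM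
      have hMsub : M ⊆ B := fun x hxM => by
        rcases Finset.mem_insert.1 (hM.1 hxM) with rfl | hxB
        · exact absurd hxM hzM
        · exact hxB
      have : M ∩ B = M := Finset.inter_eq_left.2 hMsub
      rw [this] at hle
      omega
    have hMcard1 : (M ∩ B).card = 1 := by
      have hMz : M ⊆ insert z B := hM.1
      have : M ⊆ insert z (M ∩ B) := by
        intro x hxM
        rcases Finset.mem_insert.1 (hMz hxM) with rfl | hxB
        · exact Finset.mem_insert_self _ _
        · exact Finset.mem_insert_of_mem (Finset.mem_inter.2 ⟨hxM, hxB⟩)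
      have hcard := Finset.card_le_card this
      have := Finset.card_insert_le z (M ∩ B)
      omega
    obtain ⟨cc, hcc⟩ := Finset.card_eq_one.1 hMcard1
    have hccB : cc ∈ B := (Finset.mem_inter.1 (hcc ▸ Finset.mem_singleton_self cc)).2
    have hccM : cc ∈ M := (Finset.mem_inter.1 (hcc ▸ Finset.mem_singleton_self cc)).1
    refine ⟨cc, hccB, fun x hx => ?_⟩
    by_cases hxcc : x = cc
    · subst hxcc
      exact ⟨fun hb => (btw_ne_right hb) rfl, fun hb => (btw_ne_right hb) rfl⟩
    · have hxM : x ∉ M := by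
        intro hxM
        have : x ∈ M ∩ B := Finset.mem_inter.2 ⟨hxM, hx⟩
        rw [hcc] at this
        exact hxcc (Finset.mem_singleton.1 this)
      have hns := hM.2 x (Finset.mem_insert_of_mem hx) hxM
      constructor
      · exact fun hb => hns (Or.inl ⟨z, hzM, cc, hccM, hb⟩)
      · exact fun hb => hns (Or.inr ⟨z, hzM, cc, hccM, hb⟩)
  · -- M ∩ B = B: impossible since z splits B
    exfalso
    have hBM : B ⊆ M := by
      intro x hx
      have hx2 : x ∈ M ∩ B := by rw [heq]; exact hx
      exact (Finset.mem_inter.1 hx2).1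
    by_cases hzM : z ∈ M
    · apply hMne
      apply Finset.Subset.antisymm hM.1
      intro x hx
      rcases Finset.mem_insert.1 hx with rfl | hx
      · exact hzM
      · exact hBM hx
    · refine hM.2 z (Finset.mem_insert_self z B) hzM ?_
      rcases hzs with ⟨a, ha, b, hb, hab⟩ | ⟨a, ha, b, hb, hab⟩
      · exact Or.inl ⟨a, hBM ha, b, hBM hb, hab⟩
      · exact Or.inr ⟨a, hBM ha, b, hBM hb, hab⟩

/-- partner uniqueness for k ≥ 3. -/
lemma partner_unique {B : Finset (Fin m)} (hB : SimpleIn π B) (h3 : 3 ≤ B.card)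
    {z c c' : Fin m} (hz : z ∉ B) (hc : c ∈ B) (hc' : c' ∈ B)
    (hzc : Tied π B z c) (hzc' : Tied π B z c') : c = c' := by
  by_contra hne
  have hR : RelBlock π B {c, c'} := by
    constructor
    · intro x hx
      rcases Finset.mem_insert.1 hx with rfl | hx
      · exact hc
      · exact (Finset.mem_singleton.1 hx) ▸ hc'
    · intro x hxB hxM hsp
      rcases hsp with ⟨a, ha, b, hb, hab⟩ | ⟨a, ha, b, hb, hab⟩ <;>
        simp only [Finset.mem_insert, Finset.mem_singleton] at ha hb <;>
        rcases ha with rfl | rfl <;> rcases hb with rfl | rfl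
      · exact not_btw_same hab
      · rcases btw_split (q := z) hab with h | h | h
        · exact (hzc x hxB).1 (btw_symm h)
        · exact hz (h ▸ hxB)
        · exact (hzc' x hxB).1 h
      · rcases btw_split (q := z) hab with h | h | h
        · exact (hzc' x hxB).1 (btw_symm h)
        · exact hz (h ▸ hxB)
        · exact (hzc x hxB).1 h
      · exact not_btw_same hab
      · exact not_btw_same hab
      · rcases btw_split (q := π z) hab with h | h | h
        · exact (hzc x hxB).2 (btw_symm h)
        · exact hz (π.injective h ▸ hxB)
        · exact (hzc' x hxB).2 h
      · rcases btw_split (q := π z) hab with h | h | h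
        · exact (hzc' x hxB).2 (btw_symm h)
        · exact hz (π.injective h ▸ hxB)
        · exact (hzc x hxB).2 h
      · exact not_btw_same hab
  rcases hB _ hR with hle | heq
  · rw [Finset.card_pair hne] at hle
    omega
  · have := congrArg Finset.card heq
    rw [Finset.card_pair hne] at this
    omega

/-- no corner: a point tied to some c ∈ B must split B (for k ≥ 3). -/
lemma tied_must_split {B : Finset (Fin m)} (hB : SimpleIn π B) (h3 : 3 ≤ B.card)
    {z c : Fin m} (hz : z ∉ B) (hc : c ∈ B) (hzc : Tied π B z c) : Splits π B z := by
  by_contra hns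
  unfold Splits at hns
  push_neg at hns
  obtain ⟨hns1, hns2⟩ := hns
  have hR : RelBlock π B (B.erase c) := by
    refine ⟨Finset.erase_subset c B, fun x hxB hxM hsp => ?_⟩
    have hxc : x = c := by
      by_contra hxc
      exact hxM (Finset.mem_erase.2 ⟨hxc, hxB⟩)
    subst hxc
    rcases hsp with ⟨a, ha, b, hb, hab⟩ | ⟨a, ha, b, hb, hab⟩
    · have haB := (Finset.mem_erase.1 ha).2
      have hbB := (Finset.mem_erase.1 hb).2
      rcases hab with ⟨h1, h2⟩ | ⟨h1, h2⟩
      · rcases lt_trichotomy z a with hza | hza | hza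
        · exact (hzc a haB).1 (Or.inl ⟨hza, h1⟩)
        · exact hz (hza ▸ haB)
        · rcases lt_trichotomy z b with hzb | hzb | hzb
          · exact hns1 a haB b hbB (Or.inl ⟨hza, hzb⟩)
          · exact hz (hzb ▸ hbB)
          · exact (hzc b hbB).1 (Or.inr ⟨h2, hzb⟩)
      · rcases lt_trichotomy z b with hzb | hzb | hzb
        · exact (hzc b hbB).1 (Or.inl ⟨hzb, h1⟩)
        · exact hz (hzb ▸ hbB)
        · rcases lt_trichotomy z a with hza | hza | hza
          · exact hns1 b hbB a haB (Or.inl ⟨hzb, hza⟩)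
          · exact hz (hza ▸ haB)
          · exact (hzc a haB).1 (Or.inr ⟨h2, hza⟩)
    · have haB := (Finset.mem_erase.1 ha).2
      have hbB := (Finset.mem_erase.1 hb).2
      rcases hab with ⟨h1, h2⟩ | ⟨h1, h2⟩
      · rcases lt_trichotomy (π z) (π a) with hza | hza | hza
        · exact (hzc a haB).2 (Or.inl ⟨hza, h1⟩)
        · exact hz (π.injective hza ▸ haB)
        · rcases lt_trichotomy (π z) (π b) with hzb | hzb | hzb
          · exact hns2 a haB b hbB (Or.inl ⟨hza, hzb⟩)
          · exact hz (π.injective hzb ▸ hbB)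
          · exact (hzc b hbB).2 (Or.inr ⟨h2, hzb⟩)
      · rcases lt_trichotomy (π z) (π b) with hzb | hzb | hzb
        · exact (hzc b hbB).2 (Or.inl ⟨hzb, h1⟩)
        · exact hz (π.injective hzb ▸ hbB)
        · rcases lt_trichotomy (π z) (π a) with hza | hza | hza
          · exact hns2 b hbB a haB (Or.inl ⟨hzb, hza⟩)
          · exact hz (π.injective hza ▸ haB)
          · exact (hzc a haB).2 (Or.inr ⟨h2, hza⟩)
  rcases hB _ hR with hle | heq
  · have hce : (B.erase c).card = B.card - 1 := Finset.card_erase_of_mem hc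
    omega
  · have h' : c ∈ B.erase c := by rw [heq]; exact hc
    exact Finset.notMem_erase c B h' 

end GrowUtil

section GoodPair

variable {m : ℕ} (π : Equiv.Perm (Fin m))

/-- single-coordinate contradiction for the pair-block case. -/
lemma coord_contra {B : Finset (Fin m)} {f : Fin m → Fin m} (hf : Function.Injective f)
    {z y c d : Fin m} (hzB : z ∉ B) (hyB : y ∉ B) (hcB : c ∈ B) (hdB : d ∈ B) (hdc : d ≠ c)
    (h1 : Btw (f y) (f z) (f c))
    (h2 : ∀ x ∈ B, ¬ Btw (f x) (f z) (f c))
    (h3 : ∀ x ∈ B, ¬ Btw (f x) (f y) (f d))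
    (h4 : ¬ Btw (f z) (f y) (f d)) : False := by
  rcases h1 with ⟨hzy, hyc⟩ | ⟨hcy, hyz⟩
  · rcases lt_trichotomy (f d) (f c) with hd1 | hd1 | hd1
    · rcases lt_trichotomy (f d) (f y) with hd2 | hd2 | hd2
      · rcases lt_trichotomy (f d) (f z) with hd3 | hd3 | hd3
        · exact h4 (Or.inr ⟨hd3, hzy⟩)
        · exact hzB ((hf hd3).symm ▸ hdB)
        · exact h2 d hdB (Or.inl ⟨hd3, hd1⟩)
      · exact hyB ((hf hd2) ▸ hdB)
      · exact h2 d hdB (Or.inl ⟨lt_trans hzy hd2, hd1⟩)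
    · exact hdc (hf hd1)
    · exact h3 c hcB (Or.inl ⟨hyc, hd1⟩)
  · rcases lt_trichotomy (f c) (f d) with hd1 | hd1 | hd1
    · rcases lt_trichotomy (f y) (f d) with hd2 | hd2 | hd2
      · rcases lt_trichotomy (f z) (f d) with hd3 | hd3 | hd3
        · exact h4 (Or.inl ⟨hyz, hd3⟩)
        · exact hzB ((hf hd3.symm) ▸ hdB)
        · exact h2 d hdB (Or.inr ⟨hd1, hd3⟩)
      · exact hyB ((hf hd2.symm) ▸ hdB)
      · exact h2 d hdB (Or.inr ⟨hd1, lt_trans hd2 hyz⟩)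
    · exact hdc (hf hd1.symm)
    · exact h3 c hcB (Or.inr ⟨hd1, hcy⟩)

/-- the key construction: a good splitter of a tied pair yields a simple 2-point extension. -/
lemma good_pair_simple {B : Finset (Fin m)} (hB : SimpleIn π B) (h3 : 3 ≤ B.card)
    {z c y : Fin m} (hz : z ∉ B) (hzs : Splits π B z) (hc : c ∈ B) (hzc : Tied π B z c)
    (hysp : Btw y z c ∨ Btw (π y) (π z) (π c))
    (hyz : ¬ Tied π B y z) (hyc : ¬ Tied π B y c) :
    SimpleIn π (insert y (insert z B)) := by
  have hyB : y ∉ B := split_pair_notMem π hzc hysp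
  have hyne : y ≠ z := by
    rcases hysp with h | h
    · exact btw_ne_left h
    · exact fun he => (btw_ne_left h) (he ▸ rfl)
  have hzB2 : z ∈ insert y (insert z B) := Finset.mem_insert_of_mem (Finset.mem_insert_self z B)
  have hyB2 : y ∈ insert y (insert z B) := Finset.mem_insert_self _ _
  have hBB2 : B ⊆ insert y (insert z B) :=
    fun x hx => Finset.mem_insert_of_mem (Finset.mem_insert_of_mem hx)
  intro M hM
  by_contra hcon
  push_neg at hcon
  obtain ⟨hMcard, hMne⟩ := hcon
  have hMB : RelBlock π B (M ∩ B) := relBlock_inter π hM hBB2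
  have hmemM : ∀ x ∈ M, x = y ∨ x = z ∨ x ∈ B := by
    intro x hx
    rcases Finset.mem_insert.1 (hM.1 hx) with rfl | hx'
    · exact Or.inl rfl
    · rcases Finset.mem_insert.1 hx' with rfl | hx''
      · exact Or.inr (Or.inl rfl)
      · exact Or.inr (Or.inr hx'')
  rcases hB _ hMB with hle | heq
  · -- M ∩ B small
    by_cases hMB0 : M ∩ B = ∅
    · -- M = {y, z}
      have hsub : ∀ x ∈ M, x = y ∨ x = z := by
        intro x hx
        rcases hmemM x hx with h | h | h
        · exact Or.inl h
        · exact Or.inr h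
        · exact absurd (Finset.mem_inter.2 ⟨hx, h⟩) (by rw [hMB0]; exact Finset.notMem_empty x)
      have hzM : z ∈ M := by
        by_contra hzM
        have : M ⊆ {y} := fun x hx => by
          rcases hsub x hx with rfl | rfl
          · exact Finset.mem_singleton_self _
          · exact absurd hx hzM
        have := Finset.card_le_card this
        simp at this
        omega
      have hyM : y ∈ M := by
        by_contra hyM
        have : M ⊆ {z} := fun x hx => by
          rcases hsub x hx with rfl | rfl
          · exact absurd hx hyM
          · exact Finset.mem_singleton_self _
        have := Finset.card_le_card this
        simp at this
        omega
      refine hyz (fun x hx => ?_)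
      have hxM : x ∉ M := fun hxM =>
        absurd (Finset.mem_inter.2 ⟨hxM, hx⟩) (by rw [hMB0]; exact Finset.notMem_empty x)
      have hns := hM.2 x (hBB2 hx) hxM
      exact ⟨fun hb => hns (Or.inl ⟨y, hyM, z, hzM, hb⟩),
             fun hb => hns (Or.inr ⟨y, hyM, z, hzM, hb⟩)⟩
    · -- M ∩ B = {d}
      have hcard1 : (M ∩ B).card = 1 := by
        have := Finset.card_pos.2 (Finset.nonempty_of_ne_empty hMB0)
        omega
      obtain ⟨d, hd⟩ := Finset.card_eq_one.1 hcard1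
      have hdM : d ∈ M := (Finset.mem_inter.1 (hd ▸ Finset.mem_singleton_self d)).1
      have hdB : d ∈ B := (Finset.mem_inter.1 (hd ▸ Finset.mem_singleton_self d)).2
      have hBnotM : ∀ x ∈ B, x ≠ d → x ∉ M := by
        intro x hx hxd hxM
        have : x ∈ M ∩ B := Finset.mem_inter.2 ⟨hxM, hx⟩
        rw [hd] at this
        exact hxd (Finset.mem_singleton.1 this)
      by_cases hzM : z ∈ M
      · -- z ∈ M : derive Tied z d, so d = c
        have hzd : Tied π B z d := by
          intro x hx
          by_cases hxd : x = d
          · subst hxd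
            exact ⟨fun hb => (btw_ne_right hb) rfl, fun hb => (btw_ne_right hb) rfl⟩
          · have hns := hM.2 x (hBB2 hx) (hBnotM x hx hxd)
            exact ⟨fun hb => hns (Or.inl ⟨z, hzM, d, hdM, hb⟩),
                   fun hb => hns (Or.inr ⟨z, hzM, d, hdM, hb⟩)⟩
        have hdc : d = c := partner_unique π hB h3 hz hdB hc hzd hzc
        subst hdc
        by_cases hyM : y ∈ M
        · -- M ⊇ {y, z, d=c} : derive Tied y c, contradiction
          refine hyc (fun x hx => ?_)
          by_cases hxd : x = d
          · subst hxd
            exact ⟨fun hb => (btw_ne_right hb) rfl, fun hb => (btw_ne_right hb) rfl⟩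
          · have hns := hM.2 x (hBB2 hx) (hBnotM x hx hxd)
            exact ⟨fun hb => hns (Or.inl ⟨y, hyM, d, hdM, hb⟩),
                   fun hb => hns (Or.inr ⟨y, hyM, d, hdM, hb⟩)⟩
        · -- M = {z, d=c} : y splits it
          have hns := hM.2 y hyB2 hyM
          rcases hysp with hb | hb
          · exact hns (Or.inl ⟨z, hzM, d, hdM, hb⟩)
          · exact hns (Or.inr ⟨z, hzM, d, hdM, hb⟩)
      · by_cases hyM : y ∈ M
        · -- M = {y, d} : the coordinate analysis
          have hyd : Tied π B y d := by
            intro x hx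
            by_cases hxd : x = d
            · subst hxd
              exact ⟨fun hb => (btw_ne_right hb) rfl, fun hb => (btw_ne_right hb) rfl⟩
            · have hns := hM.2 x (hBB2 hx) (hBnotM x hx hxd)
              exact ⟨fun hb => hns (Or.inl ⟨y, hyM, d, hdM, hb⟩),
                     fun hb => hns (Or.inr ⟨y, hyM, d, hdM, hb⟩)⟩
          by_cases hdc : d = c
          · exact hyc (hdc ▸ hyd)
          · have hns := hM.2 z hzB2 hzM
            have h4p : ¬ Btw z y d := fun hb => hns (Or.inl ⟨y, hyM, d, hdM, hb⟩)
            have h4v : ¬ Btw (π z) (π y) (π d) := fun hb => hns (Or.inr ⟨y, hyM, d, hdM, hb⟩)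
            rcases hysp with hb | hb
            · exact coord_contra (f := id) Function.injective_id hz hyB hc hdB hdc hb
                (fun x hx => (hzc x hx).1) (fun x hx => (hyd x hx).1) h4p
            · exact coord_contra (f := ⇑π) π.injective hz hyB hc hdB hdc hb
                (fun x hx => (hzc x hx).2) (fun x hx => (hyd x hx).2) h4v
        · -- M ⊆ {d} : too small
          have : M ⊆ {d} := by
            intro x hx
            rcases hmemM x hx with rfl | rfl | hxB
            · exact absurd hx hyM
            · exact absurd hx hzM
            · by_cases hxd : x = d
              · exact hxd ▸ Finset.mem_singleton_self d
              · exact absurd hx (hBnotM x hxB hxd)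
          have := Finset.card_le_card this
          simp at this
          omega
  · -- M ∩ B = B
    have hBM : B ⊆ M := by
      intro x hx
      have hx2 : x ∈ M ∩ B := by rw [heq]; exact hx
      exact (Finset.mem_inter.1 hx2).1
    by_cases hzM : z ∈ M
    · by_cases hyM : y ∈ M
      · refine hMne (Finset.Subset.antisymm hM.1 ?_)
        intro x hx
        rcases Finset.mem_insert.1 hx with rfl | hx'
        · exact hyM
        · rcases Finset.mem_insert.1 hx' with rfl | hx''
          · exact hzM
          · exact hBM hx''
      · have hns := hM.2 y hyB2 hyM
        rcases hysp with hb | hb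
        · exact hns (Or.inl ⟨z, hzM, c, hBM hc, hb⟩)
        · exact hns (Or.inr ⟨z, hzM, c, hBM hc, hb⟩)
    · have hns := hM.2 z hzB2 hzM
      rcases hzs with ⟨a, ha, b, hb, hab⟩ | ⟨a, ha, b, hb, hab⟩
      · exact hns (Or.inl ⟨a, hBM ha, b, hBM hb, hab⟩)
      · exact hns (Or.inr ⟨a, hBM ha, b, hBM hb, hab⟩)

end GoodPair

section Grow

variable {m : ℕ} (π : Equiv.Perm (Fin m))

lemma all_bad_contra {B : Finset (Fin m)} (hS : SimpleIn π Finset.univ) (hB : SimpleIn π B)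
    (h3 : 3 ≤ B.card) (hup : B.card + 2 ≤ m)
    {z0 c : Fin m} (hz0 : z0 ∉ B) (hz0s : Splits π B z0) (hc : c ∈ B) (hz0c : Tied π B z0 c)
    (ABH : ∀ z, z ∉ B → Splits π B z → ∀ c' ∈ B, Tied π B z c' →
       ∀ i, (Btw i z c' ∨ Btw (π i) (π z) (π c')) → Tied π B i z ∨ Tied π B i c') : False := by
  classical
  set U : Finset (Fin m) :=
    insert c ((Finset.univ \ B).filter (fun u => Tied π B u c)) with hUdef
  have hcU : c ∈ U := Finset.mem_insert_self _ _
  have hU : ∀ v ∈ U, v = c ∨ (v ∉ B ∧ Tied π B v c) := by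
    intro v hv
    rcases Finset.mem_insert.1 hv with rfl | hv'
    · exact Or.inl rfl
    · have := Finset.mem_filter.1 hv'
      exact Or.inr ⟨(Finset.mem_sdiff.1 this.1).2, this.2⟩
  have hmemU : ∀ v, v ∉ B → Tied π B v c → v ∈ U := by
    intro v hv ht
    exact Finset.mem_insert_of_mem
      (Finset.mem_filter.2 ⟨Finset.mem_sdiff.2 ⟨Finset.mem_univ v, hv⟩, ht⟩)
  have hRel : RelBlock π Finset.univ U := by
    refine ⟨Finset.subset_univ _, fun i _ hiU hsp => ?_⟩
    have hic : i ≠ c := fun he => hiU (he ▸ hcU)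
    rcases hsp with ⟨u, hu, w, hw, huw⟩ | ⟨u, hu, w, hw, huw⟩
    · -- positional splitting
      -- find q ∈ U \ {c}, q ∉ B, with Btw i q c
      have hstep : ∃ q, q ∉ B ∧ Tied π B q c ∧ Btw i q c := by
        rcases btw_split (q := c) huw with h | h | h
        · rcases hU u hu with rfl | ⟨huB, hut⟩
          · exact absurd h not_btw_same
          · exact ⟨u, huB, hut, h⟩
        · exact absurd h hic
        · rcases hU w hw with rfl | ⟨hwB, hwt⟩
          · exact absurd (btw_symm h) not_btw_same
          · exact ⟨w, hwB, hwt, btw_symm h⟩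
      obtain ⟨q, hqB, hqt, hiq⟩ := hstep
      -- i ∉ B
      have hiB : i ∉ B := fun hiB => (hqt i hiB).1 hiq
      have hitc : ¬ Tied π B i c := fun ht => hiU (hmemU i hiB ht)
      have hqs : Splits π B q := tied_must_split π hB h3 hqB hc hqt
      rcases ABH q hqB hqs c hc hqt i (Or.inl hiq) with ht | ht
      · exact hitc (tied_trans π ht hqt hqB)
      · exact hitc ht
    · -- value splitting
      have hstep : ∃ q, q ∉ B ∧ Tied π B q c ∧ Btw (π i) (π q) (π c) := by
        rcases btw_split (q := π c) huw with h | h | h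
        · rcases hU u hu with rfl | ⟨huB, hut⟩
          · exact absurd h not_btw_same
          · exact ⟨u, huB, hut, h⟩
        · exact absurd (π.injective h) hic
        · rcases hU w hw with rfl | ⟨hwB, hwt⟩
          · exact absurd (btw_symm h) not_btw_same
          · exact ⟨w, hwB, hwt, btw_symm h⟩
      obtain ⟨q, hqB, hqt, hiq⟩ := hstep
      have hiB : i ∉ B := fun hiB => (hqt i hiB).2 hiq
      have hitc : ¬ Tied π B i c := fun ht => hiU (hmemU i hiB ht)
      have hqs : Splits π B q := tied_must_split π hB h3 hqB hc hqt
      rcases ABH q hqB hqs c hc hqt i (Or.inr hiq) with ht | ht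
      · exact hitc (tied_trans π ht hqt hqB)
      · exact hitc ht
  rcases hS _ hRel with hle | heq
  · have hz0U : z0 ∈ U := hmemU z0 hz0 hz0c
    have hz0c' : z0 ≠ c := fun he => hz0 (he ▸ hc)
    have : ({z0, c} : Finset (Fin m)) ⊆ U := by
      intro x hx
      rcases Finset.mem_insert.1 hx with rfl | hx
      · exact hz0U
      · exact (Finset.mem_singleton.1 hx) ▸ hcU
    have := Finset.card_le_card this
    rw [Finset.card_pair hz0c'] at this
    omega
  · -- U = univ is impossible: B has another element besides c
    have : (B.erase c).Nonempty := by
      rw [← Finset.card_pos, Finset.card_erase_of_mem hc]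
      omega
    obtain ⟨b', hb'⟩ := this
    have hb'B := (Finset.mem_erase.1 hb').2
    have hb'c := (Finset.mem_erase.1 hb').1
    have : b' ∈ U := heq ▸ Finset.mem_univ b'
    rcases hU b' this with rfl | ⟨hbB, _⟩
    · exact hb'c rfl
    · exact hbB hb'B

lemma grow (hS : SimpleIn π Finset.univ) (B : Finset (Fin m)) (hB : SimpleIn π B)
    (h3 : 3 ≤ B.card) (hup : B.card + 2 ≤ m) :
    ∃ B' : Finset (Fin m), SimpleIn π B' ∧ (B'.card = B.card + 1 ∨ B'.card = B.card + 2) := by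
  classical
  by_cases hext : ∃ z, z ∉ B ∧ SimpleIn π (insert z B)
  · obtain ⟨z, hz, hzs⟩ := hext
    exact ⟨insert z B, hzs, Or.inl (Finset.card_insert_of_notMem hz)⟩
  push_neg at hext
  have hni : ∀ z, z ∉ B → ¬ SimpleIn π (insert z B) := hext
  -- a splitter of B exists
  have hnR : ¬ RelBlock π Finset.univ B := by
    intro hR
    rcases hS _ hR with hle | heq
    · omega
    · have := congrArg Finset.card heq
      rw [Finset.card_univ, Fintype.card_fin] at this
      omega
  have hsp : ∃ z, z ∉ B ∧ Splits π B z := by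
    by_contra h
    push_neg at h
    exact hnR ⟨Finset.subset_univ _, fun i _ hiB hisp => h i hiB hisp⟩
  obtain ⟨z0, hz0, hz0s⟩ := hsp
  obtain ⟨c, hcB, hz0c⟩ := partner_exists π hB hni hz0 hz0s
  by_cases hgood : ∃ z c' y, z ∉ B ∧ Splits π B z ∧ c' ∈ B ∧ Tied π B z c' ∧
      (Btw y z c' ∨ Btw (π y) (π z) (π c')) ∧ ¬ (Tied π B y z ∨ Tied π B y c')
  · obtain ⟨z, c', y, hz, hzs', hc', hzc', hysp, hnt⟩ := hgood
    rw [not_or] at hnt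
    obtain ⟨hyz, hyc⟩ := hnt
    have hsimp := good_pair_simple π hB h3 hz hzs' hc' hzc' hysp hyz hyc
    have hyB : y ∉ B := split_pair_notMem π hzc' hysp
    have hyne : y ≠ z := by
      rcases hysp with h | h
      · exact btw_ne_left h
      · exact fun he => (btw_ne_left h) (he ▸ rfl)
    have hynotzB : y ∉ insert z B := by
      intro hmem
      rcases Finset.mem_insert.1 hmem with rfl | hmem
      · exact hyne rfl
      · exact hyB hmem
    refine ⟨insert y (insert z B), hsimp, Or.inr ?_⟩
    rw [Finset.card_insert_of_notMem hynotzB, Finset.card_insert_of_notMem hz]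
  · exfalso
    push_neg at hgood
    exact all_bad_contra π hS hB h3 hup hz0 hz0s hcB hz0c
      (fun z hz hzs c' hc' hzc' i hisp => hgood z c' i hz hzs hc' hzc' hisp)

end Grow

section Config

variable {m : ℕ} (π : Equiv.Perm (Fin m))

/-- abbreviation: `w` separates the pair `u,v` in position or value. -/
def SP (w u v : Fin m) : Prop := Btw w u v ∨ Btw (π w) (π u) (π v)

/-- a quadruple whose pairs are all separated in the 2413/3142 pattern is simple. -/
lemma config_simple {a b c d : Fin m} (hp1 : a < b) (hp2 : b < c) (hp3 : c < d)
    (s1 : SP π d a b) (s2 : SP π b a c) (s3 : SP π b a d)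
    (s4 : SP π a b c) (s5 : SP π c b d) (s6 : SP π a c d) :
    SimpleIn π {a, b, c, d} := by
  classical
  have hab : a ≠ b := ne_of_lt hp1
  have hac : a ≠ c := ne_of_lt (hp1.trans hp2)
  have had : a ≠ d := ne_of_lt ((hp1.trans hp2).trans hp3)
  have hbc : b ≠ c := ne_of_lt hp2
  have hbd : b ≠ d := ne_of_lt (hp2.trans hp3)
  have hcd : c ≠ d := ne_of_lt hp3
  intro M hM
  by_contra hcon
  push_neg at hcon
  obtain ⟨hMcard, hMne⟩ := hcon
  set P : Finset (Fin m) := {a, b, c, d} with hPdef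
  have haP : a ∈ P := by simp [hPdef]
  have hbP : b ∈ P := by simp [hPdef]
  have hcP : c ∈ P := by simp [hPdef]
  have hdP : d ∈ P := by simp [hPdef]
  have kill : ∀ w u v : Fin m, w ∈ P → w ∉ M → u ∈ M → v ∈ M → SP π w u v → False := by
    intro w u v hwP hwM huM hvM hsp
    rcases hsp with h | h
    · exact hM.2 w hwP hwM (Or.inl ⟨u, huM, v, hvM, h⟩)
    · exact hM.2 w hwP hwM (Or.inr ⟨u, huM, v, hvM, h⟩)
  have hmem : ∀ x ∈ M, x = a ∨ x = b ∨ x = c ∨ x = d := by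
    intro x hx
    have := hM.1 hx
    simpa [hPdef] using this
  have hpair : ∀ u v : Fin m, u ≠ v → M ⊆ {u, v} → u ∈ M ∧ v ∈ M := by
    intro u v hne hsub
    have hMeq : M = {u, v} := Finset.eq_of_subset_of_card_le hsub
      (by rw [Finset.card_pair hne]; omega)
    constructor
    · rw [hMeq]; exact Finset.mem_insert_self _ _
    · rw [hMeq]; exact Finset.mem_insert_of_mem (Finset.mem_singleton_self _)
  obtain ⟨x, hxP, hxM⟩ := Finset.exists_of_ssubset (HasSubset.Subset.ssubset_of_ne hM.1 hMne)
  have hxcases : x = a ∨ x = b ∨ x = c ∨ x = d := by simpa [hPdef] using hxP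
  rcases hxcases with he | he | he | he <;> rw [he] at hxM
  · -- a ∉ M
    by_cases hcM : c ∈ M
    · by_cases hbM : b ∈ M
      · exact kill a b c haP hxM hbM hcM s4
      · have hsub : M ⊆ {c, d} := by
          intro t ht
          rcases hmem t ht with rfl | rfl | rfl | rfl
          · exact absurd ht hxM
          · exact absurd ht hbM
          · exact Finset.mem_insert_self _ _
          · exact Finset.mem_insert_of_mem (Finset.mem_singleton_self _)
        obtain ⟨hcM', hdM⟩ := hpair c d hcd hsub
        exact kill a c d haP hxM hcM' hdM s6
    · have hsub : M ⊆ {b, d} := by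
        intro t ht
        rcases hmem t ht with rfl | rfl | rfl | rfl
        · exact absurd ht hxM
        · exact Finset.mem_insert_self _ _
        · exact absurd ht hcM
        · exact Finset.mem_insert_of_mem (Finset.mem_singleton_self _)
      obtain ⟨hbM, hdM⟩ := hpair b d hbd hsub
      have hcM' : c ∉ M := hcM
      exact kill c b d hcP hcM' hbM hdM s5
  · -- b ∉ M
    by_cases haM : a ∈ M
    · by_cases hcM : c ∈ M
      · exact kill b a c hbP hxM haM hcM s2
      · by_cases hdM : d ∈ M
        · exact kill b a d hbP hxM haM hdM s3
        · have hsub : M ⊆ {a} := by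
            intro t ht
            rcases hmem t ht with rfl | rfl | rfl | rfl
            · exact Finset.mem_singleton_self _
            · exact absurd ht hxM
            · exact absurd ht hcM
            · exact absurd ht hdM
          have := Finset.card_le_card hsub
          simp at this
          omega
    · have hsub : M ⊆ {c, d} := by
        intro t ht
        rcases hmem t ht with rfl | rfl | rfl | rfl
        · exact absurd ht haM
        · exact absurd ht hxM
        · exact Finset.mem_insert_self _ _
        · exact Finset.mem_insert_of_mem (Finset.mem_singleton_self _)
      obtain ⟨hcM, hdM⟩ := hpair c d hcd hsub
      have haM' : a ∉ M := haM
      exact kill a c d haP haM' hcM hdM s6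
  · -- c ∉ M
    by_cases haM : a ∈ M
    · by_cases hbM : b ∈ M
      · by_cases hdM : d ∈ M
        · exact kill c b d hcP hxM hbM hdM s5
        · exact kill d a b hdP hdM haM hbM s1
      · by_cases hdM : d ∈ M
        · exact kill b a d hbP hbM haM hdM s3
        · have hsub : M ⊆ {a} := by
            intro t ht
            rcases hmem t ht with rfl | rfl | rfl | rfl
            · exact Finset.mem_singleton_self _
            · exact absurd ht hbM
            · exact absurd ht hxM
            · exact absurd ht hdM
          have := Finset.card_le_card hsub
          simp at this
          omega
    · have hsub : M ⊆ {b, d} := by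
        intro t ht
        rcases hmem t ht with rfl | rfl | rfl | rfl
        · exact absurd ht haM
        · exact Finset.mem_insert_self _ _
        · exact absurd ht hxM
        · exact Finset.mem_insert_of_mem (Finset.mem_singleton_self _)
      obtain ⟨hbM, hdM⟩ := hpair b d hbd hsub
      exact kill c b d hcP hxM hbM hdM s5
  · -- d ∉ M
    by_cases haM : a ∈ M
    · by_cases hbM : b ∈ M
      · exact kill d a b hdP hxM haM hbM s1
      · by_cases hcM : c ∈ M
        · exact kill b a c hbP hbM haM hcM s2
        · have hsub : M ⊆ {a} := by
            intro t ht
            rcases hmem t ht with rfl | rfl | rfl | rfl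
            · exact Finset.mem_singleton_self _
            · exact absurd ht hbM
            · exact absurd ht hcM
            · exact absurd ht hxM
          have := Finset.card_le_card hsub
          simp at this
          omega
    · have hsub : M ⊆ {b, c} := by
        intro t ht
        rcases hmem t ht with rfl | rfl | rfl | rfl
        · exact absurd ht haM
        · exact Finset.mem_insert_self _ _
        · exact Finset.mem_insert_of_mem (Finset.mem_singleton_self _)
        · exact absurd ht hxM
      obtain ⟨hbM, hcM⟩ := hpair b c hbc hsub
      exact kill a b c haP haM hbM hcM s4
  
/-- quadruple in 3142-configuration spans a simple subpattern. -/
lemma config3142 {a b c d : Fin m} (hp1 : a < b) (hp2 : b < c) (hp3 : c < d)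
    (hv1 : π b < π d) (hv2 : π d < π a) (hv3 : π a < π c) :
    SimpleIn π {a, b, c, d} ∧ ({a, b, c, d} : Finset (Fin m)).card = 4 := by
  have hcard : ({a, b, c, d} : Finset (Fin m)).card = 4 := by
    rw [Finset.card_insert_of_notMem, Finset.card_insert_of_notMem,
        Finset.card_insert_of_notMem, Finset.card_singleton]
    · simp [ne_of_lt hp3]
    · simp [ne_of_lt hp2, ne_of_lt (hp2.trans hp3)]
    · simp [ne_of_lt hp1, ne_of_lt (hp1.trans hp2), ne_of_lt ((hp1.trans hp2).trans hp3)]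
  refine ⟨config_simple π hp1 hp2 hp3 ?_ ?_ ?_ ?_ ?_ ?_, hcard⟩
  · exact Or.inr (Or.inr ⟨hv1, hv2⟩)
  · exact Or.inl (Or.inl ⟨hp1, hp2⟩)
  · exact Or.inl (Or.inl ⟨hp1, hp2.trans hp3⟩)
  · exact Or.inr (Or.inl ⟨hv1.trans hv2, hv3⟩)
  · exact Or.inl (Or.inl ⟨hp2, hp3⟩)
  · exact Or.inr (Or.inr ⟨hv2, hv3⟩)

/-- quadruple in 2413-configuration spans a simple subpattern. -/
lemma config2413 {a b c d : Fin m} (hp1 : a < b) (hp2 : b < c) (hp3 : c < d)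
    (hv1 : π c < π a) (hv2 : π a < π d) (hv3 : π d < π b) :
    SimpleIn π {a, b, c, d} ∧ ({a, b, c, d} : Finset (Fin m)).card = 4 := by
  have hcard : ({a, b, c, d} : Finset (Fin m)).card = 4 := by
    rw [Finset.card_insert_of_notMem, Finset.card_insert_of_notMem,
        Finset.card_insert_of_notMem, Finset.card_singleton]
    · simp [ne_of_lt hp3]
    · simp [ne_of_lt hp2, ne_of_lt (hp2.trans hp3)]
    · simp [ne_of_lt hp1, ne_of_lt (hp1.trans hp2), ne_of_lt ((hp1.trans hp2).trans hp3)]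
  refine ⟨config_simple π hp1 hp2 hp3 ?_ ?_ ?_ ?_ ?_ ?_, hcard⟩
  · exact Or.inr (Or.inl ⟨hv2, hv3⟩)
  · exact Or.inl (Or.inl ⟨hp1, hp2⟩)
  · exact Or.inl (Or.inl ⟨hp1, hp2.trans hp3⟩)
  · exact Or.inr (Or.inr ⟨hv1, hv2.trans hv3⟩)
  · exact Or.inl (Or.inl ⟨hp2, hp3⟩)
  · exact Or.inr (Or.inl ⟨hv1, hv2⟩)

end Config

section Sep

variable {m : ℕ} (π : Equiv.Perm (Fin m))

/-- the forbidden-pattern avoidance hypothesis on a subset. -/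
def Avoids (S : Finset (Fin m)) : Prop :=
  ∀ p1 p2 p3 p4 : Fin m, p1 ∈ S → p2 ∈ S → p3 ∈ S → p4 ∈ S →
    p1 < p2 → p2 < p3 → p3 < p4 →
    ¬(π p2 < π p4 ∧ π p4 < π p1 ∧ π p1 < π p3) ∧
    ¬(π p3 < π p1 ∧ π p1 < π p4 ∧ π p4 < π p2)

/-- every avoider of size ≥ 2 splits into an increasing or decreasing pair of parts. -/
lemma sep_split (S : Finset (Fin m)) (h2 : 2 ≤ S.card) (hAvoid : Avoids π S) :
    ∃ P₁ P₂ : Finset (Fin m), P₁.Nonempty ∧ P₂.Nonempty ∧ P₁ ∪ P₂ = S ∧ Disjoint P₁ P₂ ∧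
      ((∀ u ∈ P₁, ∀ v ∈ P₂, u < v ∧ π u < π v) ∨
       (∀ u ∈ P₁, ∀ v ∈ P₂, u < v ∧ π v < π u)) := by
  classical
  induction S using Finset.strongInduction with
  | _ S IH =>
  have hne : S.Nonempty := Finset.card_pos.1 (by omega)
  set p := S.max' hne with hp
  have hpS : p ∈ S := S.max'_mem hne
  set S' := S.erase p with hS'
  have hS'sub : S' ⊆ S := Finset.erase_subset _ _
  have hS'card : S'.card = S.card - 1 := Finset.card_erase_of_mem hpS
  have hS'lt : ∀ u ∈ S', u < p := by
    intro u hu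
    have := S.le_max' u (hS'sub hu)
    exact lt_of_le_of_ne this (Finset.mem_erase.1 hu).1
  have hS'insert : insert p S' = S := Finset.insert_erase hpS
  have hpne : ∀ u ∈ S', π u ≠ π p := by
    intro u hu he
    exact (Finset.mem_erase.1 hu).1 (π.injective he)
  have hS'ne : S'.Nonempty := Finset.card_pos.1 (by omega)
  rcases Nat.lt_or_ge S'.card 2 with hc1 | hc2
  · -- S' is a single point u
    obtain ⟨u, huS'⟩ := hS'ne
    have hup : u < p := hS'lt u huS'
    have hS'u : S' = {u} := by
      have h1 : S'.card = 1 := by omega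
      obtain ⟨w, hw⟩ := Finset.card_eq_one.1 h1
      have huw : u = w := by
        rw [hw, Finset.mem_singleton] at huS'
        exact huS'
      rw [hw, huw]
    refine ⟨{u}, {p}, ⟨u, Finset.mem_singleton_self u⟩, ⟨p, Finset.mem_singleton_self p⟩, ?_, ?_, ?_⟩
    · rw [← hS'insert, hS'u]
      ext x; simp [Finset.mem_union, Finset.mem_insert, or_comm]
    · simp only [Finset.disjoint_singleton, Finset.disjoint_singleton_right,
        Finset.mem_singleton]
      exact fun he => absurd (he ▸ hup) (lt_irrefl _)
    · rcases lt_or_gt_of_ne (hpne u huS') with h | h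
      · left
        intro a ha b hb
        rw [Finset.mem_singleton] at ha hb
        subst ha; subst hb
        exact ⟨hup, h⟩
      · right
        intro a ha b hb
        rw [Finset.mem_singleton] at ha hb
        subst ha; subst hb
        exact ⟨hup, h⟩
  · -- inductive case
    have hS'ss : S' ⊂ S := Finset.erase_ssubset hpS
    have hAvoid' : Avoids π S' := fun a b c d ha hb hc hd =>
      hAvoid a b c d (hS'sub ha) (hS'sub hb) (hS'sub hc) (hS'sub hd)
    obtain ⟨A, B, hAne, hBne, hABu, hABd, hsplit⟩ := IH S' hS'ss hc2 hAvoid'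
    have hAS' : A ⊆ S' := hABu ▸ Finset.subset_union_left
    have hBS' : B ⊆ S' := hABu ▸ Finset.subset_union_right
    rcases hsplit with hasc | hdesc
    · -- ascending split A ≺ B
      by_cases hex : ∃ bb ∈ B, π bb < π p
      · obtain ⟨bb, hbbB, hbb⟩ := hex
        refine ⟨A, insert p B, hAne, Finset.insert_nonempty _ _, ?_, ?_, Or.inl ?_⟩
        · rw [Finset.union_insert, hABu, hS'insert]
        · rw [Finset.disjoint_insert_right]
          exact ⟨fun hpA => absurd (hS'lt p (hAS' hpA)) (lt_irrefl p), hABd⟩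
        · intro u hu v hv
          rcases Finset.mem_insert.1 hv with rfl | hv
          · exact ⟨hS'lt u (hAS' hu), lt_trans (hasc u hu bb hbbB).2 hbb⟩
          · exact hasc u hu v hv
      · push_neg at hex
        have hBp : ∀ bb ∈ B, π p < π bb := fun bb hbb =>
          lt_of_le_of_ne (hex bb hbb) (Ne.symm (hpne bb (hBS' hbb)))
        by_cases hax : ∃ aa ∈ A, π p < π aa
        · obtain ⟨aa, haaA, haa⟩ := hax
          set Q := A.filter (fun u => π p < π u) with hQ
          set R := A.filter (fun u => π u < π p) with hR
          have hQR : ∀ u ∈ A, u ∈ Q ∨ u ∈ R := by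
            intro u hu
            rcases lt_or_gt_of_ne (hpne u (hAS' hu)) with h | h
            · exact Or.inr (Finset.mem_filter.2 ⟨hu, h⟩)
            · exact Or.inl (Finset.mem_filter.2 ⟨hu, h⟩)
          by_cases hRne : R.Nonempty
          · by_cases hqr : ∃ q ∈ Q, ∃ r ∈ R, q < r
            · exfalso
              obtain ⟨q, hq, r, hr, hqr'⟩ := hqr
              obtain ⟨w, hw⟩ := hBne
              have hqA := (Finset.mem_filter.1 hq).1
              have hrA := (Finset.mem_filter.1 hr).1
              have hqval := (Finset.mem_filter.1 hq).2
              have hrval := (Finset.mem_filter.1 hr).2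
              have hrw : r < w := (hasc r hrA w hw).1
              have hwp : w < p := hS'lt w (hBS' hw)
              exact (hAvoid q r w p (hS'sub (hAS' hqA)) (hS'sub (hAS' hrA))
                (hS'sub (hBS' hw)) hpS hqr' hrw hwp).1
                ⟨hrval, hqval, (hasc q hqA w hw).2⟩
            · push_neg at hqr
              have hRQ : ∀ r ∈ R, ∀ q ∈ Q, r < q := by
                intro r hr q hq
                have hne' : q ≠ r := by
                  intro he
                  have h1 := (Finset.mem_filter.1 hq).2
                  have h2 := (Finset.mem_filter.1 hr).2
                  rw [he] at h1
                  exact absurd (h1.trans h2) (lt_irrefl _)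
                exact lt_of_le_of_ne (hqr q hq r hr) (Ne.symm hne')
              refine ⟨R, insert p (Q ∪ B), hRne, Finset.insert_nonempty _ _, ?_, ?_, Or.inl ?_⟩
              · rw [Finset.union_insert]
                have : R ∪ (Q ∪ B) = S' := by
                  rw [← hABu]
                  apply Finset.Subset.antisymm
                  · intro x hx
                    rcases Finset.mem_union.1 hx with hx | hx
                    · exact Finset.mem_union_left _ ((Finset.mem_filter.1 hx).1)
                    · rcases Finset.mem_union.1 hx with hx | hx
                      · exact Finset.mem_union_left _ ((Finset.mem_filter.1 hx).1)
                      · exact Finset.mem_union_right _ hx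
                  · intro x hx
                    rcases Finset.mem_union.1 hx with hx | hx
                    · rcases hQR x hx with h | h
                      · exact Finset.mem_union_right _ (Finset.mem_union_left _ h)
                      · exact Finset.mem_union_left _ h
                    · exact Finset.mem_union_right _ (Finset.mem_union_right _ hx)
                rw [this, hS'insert]
              · rw [Finset.disjoint_insert_right]
                constructor
                · intro hpR
                  exact absurd (hS'lt p (hAS' (Finset.mem_filter.1 hpR).1)) (lt_irrefl p)
                · rw [Finset.disjoint_union_right]
                  constructor
                  · rw [Finset.disjoint_left]
                    intro x hxR hxQ
                    exact absurd ((Finset.mem_filter.1 hxQ).2.trans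
                      (Finset.mem_filter.1 hxR).2) (lt_irrefl _)
                  · exact Finset.disjoint_of_subset_left
                      (fun x hx => (Finset.mem_filter.1 hx).1) hABd
              · intro u hu v hv
                have huR := Finset.mem_filter.1 hu
                rcases Finset.mem_insert.1 hv with rfl | hv
                · exact ⟨hS'lt u (hAS' huR.1), huR.2⟩
                · rcases Finset.mem_union.1 hv with hv | hv
                  · exact ⟨hRQ u hu v hv, lt_trans huR.2 (Finset.mem_filter.1 hv).2⟩
                  · exact hasc u huR.1 v hv
          · -- R empty : p below everything, descending split (S', {p})
            refine ⟨S', {p}, hS'ne, ⟨p, Finset.mem_singleton_self p⟩, ?_, ?_, Or.inr ?_⟩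
            · rw [Finset.union_comm, ← Finset.insert_eq, hS'insert]
            · simp only [Finset.disjoint_singleton_right]
              exact Finset.notMem_erase p S
            · intro u hu v hv
              rw [Finset.mem_singleton] at hv
              subst hv
              refine ⟨hS'lt u hu, ?_⟩
              rw [← hABu] at hu
              rcases Finset.mem_union.1 hu with hu | hu
              · rcases hQR u hu with h | h
                · exact (Finset.mem_filter.1 h).2
                · exact absurd ⟨u, h⟩ hRne
              · exact hBp u hu
        · push_neg at hax
          have hAp : ∀ aa ∈ A, π aa < π p := fun aa haa =>
            lt_of_le_of_ne (hax aa haa) (hpne aa (hAS' haa))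
          refine ⟨A, insert p B, hAne, Finset.insert_nonempty _ _, ?_, ?_, Or.inl ?_⟩
          · rw [Finset.union_insert, hABu, hS'insert]
          · rw [Finset.disjoint_insert_right]
            exact ⟨fun hpA => absurd (hS'lt p (hAS' hpA)) (lt_irrefl p), hABd⟩
          · intro u hu v hv
            rcases Finset.mem_insert.1 hv with rfl | hv
            · exact ⟨hS'lt u (hAS' hu), hAp u hu⟩
            · exact hasc u hu v hv
    · -- descending split A ≻ B (in value)
      by_cases hex : ∃ bb ∈ B, π p < π bb
      · obtain ⟨bb, hbbB, hbb⟩ := hex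
        refine ⟨A, insert p B, hAne, Finset.insert_nonempty _ _, ?_, ?_, Or.inr ?_⟩
        · rw [Finset.union_insert, hABu, hS'insert]
        · rw [Finset.disjoint_insert_right]
          exact ⟨fun hpA => absurd (hS'lt p (hAS' hpA)) (lt_irrefl p), hABd⟩
        · intro u hu v hv
          rcases Finset.mem_insert.1 hv with rfl | hv
          · exact ⟨hS'lt u (hAS' hu), lt_trans hbb (hdesc u hu bb hbbB).2⟩
          · exact hdesc u hu v hv
      · push_neg at hex
        have hBp : ∀ bb ∈ B, π bb < π p := fun bb hbb =>
          lt_of_le_of_ne (hex bb hbb) (hpne bb (hBS' hbb))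
        by_cases hax : ∃ aa ∈ A, π aa < π p
        · obtain ⟨aa, haaA, haa⟩ := hax
          set Q := A.filter (fun u => π u < π p) with hQ
          set R := A.filter (fun u => π p < π u) with hR
          have hQR : ∀ u ∈ A, u ∈ Q ∨ u ∈ R := by
            intro u hu
            rcases lt_or_gt_of_ne (hpne u (hAS' hu)) with h | h
            · exact Or.inl (Finset.mem_filter.2 ⟨hu, h⟩)
            · exact Or.inr (Finset.mem_filter.2 ⟨hu, h⟩)
          by_cases hRne : R.Nonempty
          · by_cases hqr : ∃ q ∈ Q, ∃ r ∈ R, q < r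
            · exfalso
              obtain ⟨q, hq, r, hr, hqr'⟩ := hqr
              obtain ⟨w, hw⟩ := hBne
              have hqA := (Finset.mem_filter.1 hq).1
              have hrA := (Finset.mem_filter.1 hr).1
              have hqval := (Finset.mem_filter.1 hq).2
              have hrval := (Finset.mem_filter.1 hr).2
              have hrw : r < w := (hdesc r hrA w hw).1
              have hwp : w < p := hS'lt w (hBS' hw)
              exact (hAvoid q r w p (hS'sub (hAS' hqA)) (hS'sub (hAS' hrA))
                (hS'sub (hBS' hw)) hpS hqr' hrw hwp).2
                ⟨(hdesc q hqA w hw).2, hqval, hrval⟩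
            · push_neg at hqr
              have hRQ : ∀ r ∈ R, ∀ q ∈ Q, r < q := by
                intro r hr q hq
                have hne' : q ≠ r := by
                  intro he
                  have h1 := (Finset.mem_filter.1 hq).2
                  have h2 := (Finset.mem_filter.1 hr).2
                  rw [he] at h1
                  exact absurd (h2.trans h1) (lt_irrefl _)
                exact lt_of_le_of_ne (hqr q hq r hr) (Ne.symm hne')
              refine ⟨R, insert p (Q ∪ B), hRne, Finset.insert_nonempty _ _, ?_, ?_, Or.inr ?_⟩
              · rw [Finset.union_insert]
                have : R ∪ (Q ∪ B) = S' := by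
                  rw [← hABu]
                  apply Finset.Subset.antisymm
                  · intro x hx
                    rcases Finset.mem_union.1 hx with hx | hx
                    · exact Finset.mem_union_left _ ((Finset.mem_filter.1 hx).1)
                    · rcases Finset.mem_union.1 hx with hx | hx
                      · exact Finset.mem_union_left _ ((Finset.mem_filter.1 hx).1)
                      · exact Finset.mem_union_right _ hx
                  · intro x hx
                    rcases Finset.mem_union.1 hx with hx | hx
                    · rcases hQR x hx with h | h
                      · exact Finset.mem_union_right _ (Finset.mem_union_left _ h)
                      · exact Finset.mem_union_left _ h
                    · exact Finset.mem_union_right _ (Finset.mem_union_right _ hx)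
                rw [this, hS'insert]
              · rw [Finset.disjoint_insert_right]
                constructor
                · intro hpR
                  exact absurd (hS'lt p (hAS' (Finset.mem_filter.1 hpR).1)) (lt_irrefl p)
                · rw [Finset.disjoint_union_right]
                  constructor
                  · rw [Finset.disjoint_left]
                    intro x hxR hxQ
                    exact absurd ((Finset.mem_filter.1 hxQ).2.trans
                      (Finset.mem_filter.1 hxR).2) (lt_irrefl _)
                  · exact Finset.disjoint_of_subset_left
                      (fun x hx => (Finset.mem_filter.1 hx).1) hABd
              · intro u hu v hv
                have huR := Finset.mem_filter.1 hu
                rcases Finset.mem_insert.1 hv with rfl | hv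
                · exact ⟨hS'lt u (hAS' huR.1), huR.2⟩
                · rcases Finset.mem_union.1 hv with hv | hv
                  · exact ⟨hRQ u hu v hv, lt_trans (Finset.mem_filter.1 hv).2 huR.2⟩
                  · exact hdesc u huR.1 v hv
          · -- R empty : everything below p in value, ascending split (S', {p})
            refine ⟨S', {p}, hS'ne, ⟨p, Finset.mem_singleton_self p⟩, ?_, ?_, Or.inl ?_⟩
            · rw [Finset.union_comm, ← Finset.insert_eq, hS'insert]
            · simp only [Finset.disjoint_singleton_right]
              exact Finset.notMem_erase p S
            · intro u hu v hv
              rw [Finset.mem_singleton] at hv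
              subst hv
              refine ⟨hS'lt u hu, ?_⟩
              rw [← hABu] at hu
              rcases Finset.mem_union.1 hu with hu | hu
              · rcases hQR u hu with h | h
                · exact (Finset.mem_filter.1 h).2
                · exact absurd ⟨u, h⟩ hRne
              · exact hBp u hu
        · push_neg at hax
          have hAp : ∀ aa ∈ A, π p < π aa := fun aa haa =>
            lt_of_le_of_ne (hax aa haa) (Ne.symm (hpne aa (hAS' haa)))
          refine ⟨A, insert p B, hAne, Finset.insert_nonempty _ _, ?_, ?_, Or.inr ?_⟩
          · rw [Finset.union_insert, hABu, hS'insert]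
          · rw [Finset.disjoint_insert_right]
            exact ⟨fun hpA => absurd (hS'lt p (hAS' hpA)) (lt_irrefl p), hABd⟩
          · intro u hu v hv
            rcases Finset.mem_insert.1 hv with rfl | hv
            · exact ⟨hS'lt u (hAS' hu), hAp u hu⟩
            · exact hdesc u hu v hv

end Sep

section SepMain

variable {m : ℕ} (π : Equiv.Perm (Fin m))

lemma sep' (hS : SimpleIn π Finset.univ) (h4 : 4 ≤ m) :
    ∃ P : Finset (Fin m), SimpleIn π P ∧ P.card = 4 := by
  classical
  by_cases hEx : ∃ p1 p2 p3 p4 : Fin m, p1 < p2 ∧ p2 < p3 ∧ p3 < p4 ∧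
      ((π p2 < π p4 ∧ π p4 < π p1 ∧ π p1 < π p3) ∨
       (π p3 < π p1 ∧ π p1 < π p4 ∧ π p4 < π p2))
  · obtain ⟨p1, p2, p3, p4, h12, h23, h34, hv⟩ := hEx
    rcases hv with ⟨hv1, hv2, hv3⟩ | ⟨hv1, hv2, hv3⟩
    · obtain ⟨hs, hc⟩ := config3142 π h12 h23 h34 hv1 hv2 hv3
      exact ⟨_, hs, hc⟩
    · obtain ⟨hs, hc⟩ := config2413 π h12 h23 h34 hv1 hv2 hv3
      exact ⟨_, hs, hc⟩
  · exfalso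
    push_neg at hEx
    have hAv : Avoids π Finset.univ := by
      intro p1 p2 p3 p4 _ _ _ _ h12 h23 h34
      have h := hEx p1 p2 p3 p4 h12 h23 h34
      constructor
      · rintro ⟨x1, x2, x3⟩
        exact absurd x3 (not_lt.2 (h.1 x1 x2))
      · rintro ⟨x1, x2, x3⟩
        exact absurd x3 (not_lt.2 (h.2 x1 x2))
    have hcard : 2 ≤ (Finset.univ : Finset (Fin m)).card := by
      rw [Finset.card_univ, Fintype.card_fin]; omega
    obtain ⟨P₁, P₂, h1ne, h2ne, huni, hdisj, hsp⟩ := sep_split π Finset.univ hcard hAv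
    have hmem : ∀ i : Fin m, i ∉ P₁ → i ∈ P₂ := by
      intro i hi
      have : i ∈ P₁ ∪ P₂ := huni ▸ Finset.mem_univ i
      rcases Finset.mem_union.1 this with h | h
      · exact absurd h hi
      · exact h
    have hmem' : ∀ i : Fin m, i ∉ P₂ → i ∈ P₁ := by
      intro i hi
      have : i ∈ P₁ ∪ P₂ := huni ▸ Finset.mem_univ i
      rcases Finset.mem_union.1 this with h | h
      · exact h
      · exact absurd h hi
    have hR1 : RelBlock π Finset.univ P₁ := by
      refine ⟨Finset.subset_univ _, fun i _ hiP hspl => ?_⟩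
      have hiP2 := hmem i hiP
      rcases hspl with ⟨a, ha, b, hb, hab⟩ | ⟨a, ha, b, hb, hab⟩
      · rcases hsp with hasc | hdesc
        · have h1 := (hasc a ha i hiP2).1
          have h2 := (hasc b hb i hiP2).1
          rcases hab with ⟨x1, x2⟩ | ⟨x1, x2⟩
          · exact absurd (x2.trans h2) (lt_irrefl _)
          · exact absurd (x2.trans h1) (lt_irrefl _)
        · have h1 := (hdesc a ha i hiP2).1
          have h2 := (hdesc b hb i hiP2).1
          rcases hab with ⟨x1, x2⟩ | ⟨x1, x2⟩
          · exact absurd (x2.trans h2) (lt_irrefl _)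
          · exact absurd (x2.trans h1) (lt_irrefl _)
      · rcases hsp with hasc | hdesc
        · have h1 := (hasc a ha i hiP2).2
          have h2 := (hasc b hb i hiP2).2
          rcases hab with ⟨x1, x2⟩ | ⟨x1, x2⟩
          · exact absurd (x2.trans h2) (lt_irrefl _)
          · exact absurd (x2.trans h1) (lt_irrefl _)
        · have h1 := (hdesc a ha i hiP2).2
          have h2 := (hdesc b hb i hiP2).2
          rcases hab with ⟨x1, x2⟩ | ⟨x1, x2⟩
          · exact absurd (h1.trans x1) (lt_irrefl _)
          · exact absurd (h2.trans x1) (lt_irrefl _)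
    have hR2 : RelBlock π Finset.univ P₂ := by
      refine ⟨Finset.subset_univ _, fun i _ hiP hspl => ?_⟩
      have hiP1 := hmem' i hiP
      rcases hspl with ⟨a, ha, b, hb, hab⟩ | ⟨a, ha, b, hb, hab⟩
      · rcases hsp with hasc | hdesc
        · have h1 := (hasc i hiP1 a ha).1
          have h2 := (hasc i hiP1 b hb).1
          rcases hab with ⟨x1, x2⟩ | ⟨x1, x2⟩
          · exact absurd (h1.trans x1) (lt_irrefl _)
          · exact absurd (h2.trans x1) (lt_irrefl _)
        · have h1 := (hdesc i hiP1 a ha).1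
          have h2 := (hdesc i hiP1 b hb).1
          rcases hab with ⟨x1, x2⟩ | ⟨x1, x2⟩
          · exact absurd (h1.trans x1) (lt_irrefl _)
          · exact absurd (h2.trans x1) (lt_irrefl _)
      · rcases hsp with hasc | hdesc
        · have h1 := (hasc i hiP1 a ha).2
          have h2 := (hasc i hiP1 b hb).2
          rcases hab with ⟨x1, x2⟩ | ⟨x1, x2⟩
          · exact absurd (h1.trans x1) (lt_irrefl _)
          · exact absurd (h2.trans x1) (lt_irrefl _)
        · have h1 := (hdesc i hiP1 a ha).2
          have h2 := (hdesc i hiP1 b hb).2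
          rcases hab with ⟨x1, x2⟩ | ⟨x1, x2⟩
          · exact absurd (x2.trans h2) (lt_irrefl _)
          · exact absurd (x2.trans h1) (lt_irrefl _)
    have hc1 : P₁.card ≤ 1 := by
      rcases hS _ hR1 with h | h
      · exact h
      · exfalso
        obtain ⟨y, hy⟩ := h2ne
        have hy1 : y ∈ P₁ := h ▸ Finset.mem_univ y
        exact (Finset.disjoint_left.1 hdisj hy1) hy
    have hc2 : P₂.card ≤ 1 := by
      rcases hS _ hR2 with h | h
      · exact h
      · exfalso
        obtain ⟨y, hy⟩ := h1ne
        have hy2 : y ∈ P₂ := h ▸ Finset.mem_univ y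
        exact (Finset.disjoint_left.1 hdisj hy) hy2
    have := Finset.card_union_of_disjoint hdisj
    rw [huni, Finset.card_univ, Fintype.card_fin] at this
    omega

end SepMain

section Small

variable {m : ℕ} (π : Equiv.Perm (Fin m))

/-- there is no simple permutation of length 3. -/
lemma no_simple_three (σ : Equiv.Perm (Fin 3)) : ¬ IsSimplePerm σ := by
  intro hs
  have hS : SimpleIn σ Finset.univ := (isSimplePerm_iff_simpleIn_univ σ).1 hs
  have hkey : ¬ Btw (σ 2) (σ 0) (σ 1) ∨ ¬ Btw (σ 0) (σ 1) (σ 2) := by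
    by_contra h
    push_neg at h
    obtain ⟨h1, h2⟩ := h
    rcases h1 with ⟨a1, a2⟩ | ⟨a1, a2⟩ <;> rcases h2 with ⟨b1, b2⟩ | ⟨b1, b2⟩ <;>
      rw [Fin.lt_def] at a1 a2 b1 b2 <;> omega
  have hblock : ∀ M : Finset (Fin 3), M.card = 2 → RelBlock σ Finset.univ M → False := by
    intro M hcard hR
    rcases hS _ hR with hc | he
    · omega
    · have := congrArg Finset.card he
      simp [hcard] at this
  rcases hkey with hk | hk
  · refine hblock {0, 1} (by decide) ⟨Finset.subset_univ _, fun i _ hi hsp => ?_⟩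
    fin_cases i
    · simp at hi
    · simp at hi
    · rcases hsp with ⟨a, ha, b, hb, hab⟩ | ⟨a, ha, b, hb, hab⟩ <;>
        simp only [Finset.mem_insert, Finset.mem_singleton] at ha hb <;>
        rcases ha with rfl | rfl <;> rcases hb with rfl | rfl
      · exact not_btw_same hab
      · exact absurd hab (by decide)
      · exact absurd hab (by decide)
      · exact not_btw_same hab
      · exact not_btw_same hab
      · exact hk hab
      · exact hk (btw_symm hab)
      · exact not_btw_same hab
  · refine hblock {1, 2} (by decide) ⟨Finset.subset_univ _, fun i _ hi hsp => ?_⟩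
    fin_cases i
    case _ =>
      rcases hsp with ⟨a, ha, b, hb, hab⟩ | ⟨a, ha, b, hb, hab⟩ <;>
        simp only [Finset.mem_insert, Finset.mem_singleton] at ha hb <;>
        rcases ha with rfl | rfl <;> rcases hb with rfl | rfl
      · exact not_btw_same hab
      · exact absurd hab (by decide)
      · exact absurd hab (by decide)
      · exact not_btw_same hab
      · exact not_btw_same hab
      · exact hk hab
      · exact hk (btw_symm hab)
      · exact not_btw_same hab
    · simp at hi
    · simp at hi

end Small

section MainLemmas

variable {m : ℕ} (π : Equiv.Perm (Fin m))

lemma chain (hS : SimpleIn π Finset.univ) :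
    ∀ j, 4 ≤ j → j + 1 ≤ m → ∃ P : Finset (Fin m), SimpleIn π P ∧ (P.card = j ∨ P.card = j + 1) := by
  intro j hj
  induction j, hj using Nat.le_induction with
  | base =>
    intro h5
    obtain ⟨P, hP, hc⟩ := sep' π hS (by omega)
    exact ⟨P, hP, Or.inl hc⟩
  | succ j hj ih =>
    intro hjm
    obtain ⟨P, hP, hc⟩ := ih (by omega)
    rcases hc with hc | hc
    · obtain ⟨B', hB', hc'⟩ := grow π hS P hP (by omega) (by omega)
      rw [hc] at hc'
      exact ⟨B', hB', hc'⟩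
    · exact ⟨P, hP, Or.inl hc⟩

end MainLemmas


end STP

open STP in
/-- If a permutation class contains no simple permutation of length
`n − 1` and none of length `n − 2` (where `n ≥ 3`), then it contains no simple
permutation of any length `m ≥ n − 2`. -/
theorem no_simple_of_ge_of_no_simple_two_consecutive
    (C : Set PermAny) (hC : IsPermClass C) (n : ℕ) (hn : 3 ≤ n)
    (h1 : ∀ p ∈ C, p.1 = n - 1 → ¬ IsSimplePerm p.2)
    (h2 : ∀ p ∈ C, p.1 = n - 2 → ¬ IsSimplePerm p.2) :
    ∀ p ∈ C, n - 2 ≤ p.1 → ¬ IsSimplePerm p.2 := by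
  rintro ⟨m, π⟩ hp hlen hsimp
  simp only at hlen hsimp
  have hS : SimpleIn π Finset.univ := (isSimplePerm_iff_simpleIn_univ π).1 hsimp
  -- killer: no simple subpattern of size n-1 or n-2 can exist
  have kill : ∀ P : Finset (Fin m), SimpleIn π P → (P.card = n - 1 ∨ P.card = n - 2) → False := by
    intro P hP hc
    have hmem : (⟨P.card, patt π P⟩ : PermAny) ∈ C :=
      hC ⟨m, π⟩ hp ⟨P.card, patt π P⟩ (containsPat_patt π P)
    have hsimple : IsSimplePerm (patt π P) := isSimplePerm_patt π P hP
    rcases hc with hc | hc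
    · exact h1 _ hmem hc hsimple
    · exact h2 _ hmem hc hsimple
  have hcard_univ : (Finset.univ : Finset (Fin m)).card = m := by simp
  rcases Nat.lt_or_ge m n with hmn | hmn
  · -- m = n-1 or n-2
    rcases Nat.lt_or_ge m (n-1) with hmn1 | hmn1
    · exact kill Finset.univ hS (Or.inr (by omega))
    · exact kill Finset.univ hS (Or.inl (by omega))
  · -- m ≥ n
    rcases Nat.lt_or_ge n 5 with hn5 | hn5
    · rcases Nat.lt_or_ge n 4 with hn4 | hn4
      · -- n = 3 : use a 1-element subset
        obtain ⟨P, hPsub, hPcard⟩ := Finset.exists_subset_card_eq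
          (s := (Finset.univ : Finset (Fin m))) (n := 1) (by simpa using (by omega : 1 ≤ m))
        exact kill P (simpleIn_of_card_le_two π (by omega)) (Or.inr (by omega))
      · -- n = 4 : use a 2-element subset
        obtain ⟨P, hPsub, hPcard⟩ := Finset.exists_subset_card_eq
          (s := (Finset.univ : Finset (Fin m))) (n := 2) (by simpa using (by omega : 2 ≤ m))
        exact kill P (simpleIn_of_card_le_two π (by omega)) (Or.inr (by omega))
    · rcases Nat.lt_or_ge n 6 with hn6 | hn6
      · -- n = 5 : use sep to find a simple 4-subset, 4 = n-1
        obtain ⟨P, hP, hc⟩ := sep' π hS (by omega)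
        exact kill P hP (Or.inl (by omega))
      · -- n ≥ 6 : chain
        obtain ⟨P, hP, hc⟩ := chain π hS (n - 2) (by omega) (by omega)
        rcases hc with hc | hc
        · exact kill P hP (Or.inr hc)
        · exact kill P hP (Or.inl (by omega))
end
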